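/- arXiv:1301.3784 — 4 statements merged into one kernel-verified Lean document; each statement's English description precedes it below -/
import Mathlib

section
/- The matrix seminorm induced by the vector seminorm measuring distance to the all-ones line is submultiplicative on row-stochastic matrices: for stochastic n×n matrices A and B, ‖A·B‖ ≤ ‖A‖·‖B‖. -/
open Matrix Filter

/-- Row-stochastic matrix: nonnegative entries and row sums equal to 1. -/
def Stochastic {n : ℕ} (A : Matrix (Fin n) (Fin n) ℝ) : Prop :=
  (∀ i j, 0 ≤ A i j) ∧ ∀ i, ∑ j, A i j = 1

/-- There is a walk of length `k` from `i` to `j` in the digraph with edge relation `E`. -/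
def HasWalk {n : ℕ} (E : Fin n → Fin n → Prop) (i j : Fin n) (k : ℕ) : Prop :=
  ∃ f : ℕ → Fin n, f 0 = i ∧ f k = j ∧ ∀ m < k, E (f m) (f (m + 1))

/-- The gcd of the lengths of closed walks at `i` (which all stay inside the strongly
connected component of `i`) is 1.  Equivalently, the component of `i` is aperiodic. -/
def AperiodicAt {n : ℕ} (E : Fin n → Fin n → Prop) (i : Fin n) : Prop :=
  ∀ d : ℕ, (∀ k, 0 < k → HasWalk E i i k → d ∣ k) → d = 1

/-- `backProd A l m = A (l+m) ⬝ A (l+m-1) ⬝ ⋯ ⬝ A (l+1)`, so that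
`backProd A l (k-l)` is the partial product `P(k,l)` and `backProd A 0 k = P(k)`. -/
def backProd {n : ℕ} (A : ℕ → Matrix (Fin n) (Fin n) ℝ) (l : ℕ) : ℕ → Matrix (Fin n) (Fin n) ℝ
  | 0 => 1
  | m + 1 => A (l + m + 1) * backProd A l m

/-- Vector seminorm: sup-norm distance to the line spanned by the all-ones vector. -/
noncomputable def sn {n : ℕ} (x : Fin n → ℝ) : ℝ :=
  ⨅ c : ℝ, ‖x - Function.const (Fin n) c‖

/-- Induced matrix seminorm `‖A‖ = sup { ‖Ax‖/‖x‖ : ‖x‖ ≠ 0 }`. -/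
noncomputable def msn {n : ℕ} (A : Matrix (Fin n) (Fin n) ℝ) : ℝ :=
  sSup {r : ℝ | ∃ x : Fin n → ℝ, sn x ≠ 0 ∧ r = sn (A.mulVec x) / sn x}

/-- `mu P j` = minimum of the positive entries of column `j` of `P`. -/
noncomputable def mu {n : ℕ} (P : Matrix (Fin n) (Fin n) ℝ) (j : Fin n) : ℝ :=
  sInf {v : ℝ | ∃ i, 0 < P i j ∧ P i j = v}

/-- Completely reducible: whenever `A i j > 0` there is a directed walk from `j`
back to `i` in `G(A)`; i.e. no edges between distinct strongly connected components. -/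
def CompRed {n : ℕ} (A : Matrix (Fin n) (Fin n) ℝ) : Prop :=
  ∀ i j, 0 < A i j → ∃ k, HasWalk (fun a b => 0 < A a b) j i k

lemma sn_nonneg {n : ℕ} (x : Fin n → ℝ) : 0 ≤ sn x :=
  Real.iInf_nonneg fun _ => norm_nonneg _

lemma sn_le {n : ℕ} (x : Fin n → ℝ) (c : ℝ) : sn x ≤ ‖x - Function.const (Fin n) c‖ :=
  ciInf_le ⟨0, fun _ ⟨c, hc⟩ => hc ▸ norm_nonneg _⟩ c

lemma mulVec_const {n : ℕ} {A : Matrix (Fin n) (Fin n) ℝ} (hA : Stochastic A) (c : ℝ) :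
    A.mulVec (Function.const (Fin n) c) = Function.const (Fin n) c := by
  funext i
  simp [Matrix.mulVec, dotProduct, Function.const, ← Finset.sum_mul, hA.2 i]

lemma norm_mulVec_le {n : ℕ} {A : Matrix (Fin n) (Fin n) ℝ} (hA : Stochastic A)
    (y : Fin n → ℝ) : ‖A.mulVec y‖ ≤ ‖y‖ := by
  rw [pi_norm_le_iff_of_nonneg (norm_nonneg y)]
  intro i
  calc ‖A.mulVec y i‖ = |∑ j, A i j * y j| := rfl
    _ ≤ ∑ j, |A i j * y j| := Finset.abs_sum_le_sum_abs _ _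
    _ ≤ ∑ j, A i j * ‖y‖ := by
        refine Finset.sum_le_sum fun j _ => ?_
        rw [abs_mul, abs_of_nonneg (hA.1 i j)]
        exact mul_le_mul_of_nonneg_left (norm_le_pi_norm y j) (hA.1 i j)
    _ = ‖y‖ := by rw [← Finset.sum_mul, hA.2 i, one_mul]

lemma sn_mulVec_le {n : ℕ} {A : Matrix (Fin n) (Fin n) ℝ} (hA : Stochastic A)
    (x : Fin n → ℝ) : sn (A.mulVec x) ≤ sn x := by
  refine ciInf_mono ⟨0, fun _ ⟨c, hc⟩ => hc ▸ norm_nonneg _⟩ fun c => ?_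
  have h : A.mulVec x - Function.const (Fin n) c = A.mulVec (x - Function.const (Fin n) c) := by
    rw [Matrix.mulVec_sub, mulVec_const hA]
  rw [h]
  exact norm_mulVec_le hA _

lemma msn_bddAbove {n : ℕ} {A : Matrix (Fin n) (Fin n) ℝ} (hA : Stochastic A) :
    BddAbove {r : ℝ | ∃ x : Fin n → ℝ, sn x ≠ 0 ∧ r = sn (A.mulVec x) / sn x} := by
  refine ⟨1, fun r ⟨x, hx, hr⟩ => ?_⟩
  have hpos : 0 < sn x := lt_of_le_of_ne (sn_nonneg x) (Ne.symm hx)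
  rw [hr, div_le_one hpos]
  exact sn_mulVec_le hA x

lemma msn_nonneg {n : ℕ} (A : Matrix (Fin n) (Fin n) ℝ) : 0 ≤ msn A := by
  apply Real.sSup_nonneg
  rintro r ⟨x, hx, hr⟩
  have hpos : 0 < sn x := lt_of_le_of_ne (sn_nonneg x) (Ne.symm hx)
  rw [hr]
  exact div_nonneg (sn_nonneg _) hpos.le

lemma sn_mulVec_le_msn {n : ℕ} {A : Matrix (Fin n) (Fin n) ℝ} (hA : Stochastic A)
    (x : Fin n → ℝ) : sn (A.mulVec x) ≤ msn A * sn x := by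
  rcases eq_or_ne (sn x) 0 with h | h
  · rw [h, mul_zero]
    exact le_trans (sn_mulVec_le hA x) h.le
  · have hpos : 0 < sn x := lt_of_le_of_ne (sn_nonneg x) (Ne.symm h)
    rw [← div_le_iff₀ hpos] at *
    exact le_csSup (msn_bddAbove hA) ⟨x, h, rfl⟩

theorem stmt5 {n : ℕ} (A B : Matrix (Fin n) (Fin n) ℝ)
    (hA : Stochastic A) (hB : Stochastic B) :
    msn (A * B) ≤ msn A * msn B := by
  apply Real.sSup_le
  · rintro r ⟨x, hx, hr⟩
    have hpos : 0 < sn x := lt_of_le_of_ne (sn_nonneg x) (Ne.symm hx)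
    rw [hr, div_le_iff₀ hpos, ← Matrix.mulVec_mulVec]
    calc sn (A.mulVec (B.mulVec x)) ≤ msn A * sn (B.mulVec x) := sn_mulVec_le_msn hA _
      _ ≤ msn A * (msn B * sn x) :=
          mul_le_mul_of_nonneg_left (sn_mulVec_le_msn hB x) (msn_nonneg A)
      _ = msn A * msn B * sn x := by ring
  · exact mul_nonneg (msn_nonneg A) (msn_nonneg B)
end

section
/- Let A(k), k ≥ 1, be n×n row-stochastic matrices satisfying: (1) there is α > 0 with every positive entry of every A(k) at least α; (2) for every k there is K ≥ k with all entries of Σ_{k'=k}^{K} A(k')···A(k) positive; (3) each A(k) is completely reducible; (4) there is a common aperiodic digraph H without sinks on {1,…,n} that is a subgraph of every G(A(k)). Then there exists K such that every entry of P(k) = A(k)···A(1) is at least α^{n(n²−2n+3)} for all k ≥ K. -/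
open Matrix Filter

/-!
Fix a column `j` and grow a union `U` of strongly connected components of `H`, starting from the
component of `j`, on which `P(t)_{v j} ≥ α ^ (n * #U)` for all `v ∈ U`. While no row of `U` puts
mass outside `U`, rows average and the bound persists. Ergodicity forces such an exit eventually;
complete reducibility turns it into an entry `a → b` into `U`, so `a` inherits the bound up to a
factor `α`. Since `H` is aperiodic, after some `F < n * #C` steps every vertex of the component `C`
of `a` has an `H`-walk of length exactly `F` to `a`, while on `U` the bound loses one factor `α`
per step along `H`-edges inside components. Once `U` is everything the bound is `α ^ (n * n)`,
and averaging keeps it forever.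
-/

open Relation Finset Function

namespace HasWalk

variable {n : ℕ} {E : Fin n → Fin n → Prop} {i j k : Fin n} {a b : ℕ}

theorem refl (E : Fin n → Fin n → Prop) (i : Fin n) : HasWalk E i i 0 :=
  ⟨fun _ => i, rfl, rfl, fun _ h => absurd h (Nat.not_lt_zero _)⟩

theorem zero_iff : HasWalk E i j 0 ↔ i = j :=
  ⟨fun ⟨_, h0, h1, _⟩ => h0.symm.trans h1, fun h => h ▸ refl E i⟩

theorem succ_iff : HasWalk E i j (a + 1) ↔ ∃ m, E i m ∧ HasWalk E m j a := by
  constructor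
  · rintro ⟨f, h0, ha, he⟩
    exact ⟨f 1, h0 ▸ he 0 a.succ_pos, fun t => f (t + 1), rfl, ha,
      fun t ht => he (t + 1) (by omega)⟩
  · rintro ⟨m, hm, f, h0, ha, he⟩
    refine ⟨fun t => if t = 0 then i else f (t - 1), by simp, by simpa using ha, ?_⟩
    rintro (_ | t) ht
    · simpa [h0] using hm
    · simpa using he t (by omega)

theorem append (h₁ : HasWalk E i j a) (h₂ : HasWalk E j k b) : HasWalk E i k (a + b) := by
  induction a generalizing i with
  | zero => rwa [zero_iff.1 h₁, zero_add]
  | succ a ih =>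
    obtain ⟨m, hm, h⟩ := succ_iff.1 h₁
    rw [Nat.add_right_comm]
    exact succ_iff.2 ⟨m, hm, ih h⟩

theorem closed_mul (h : HasWalk E i i a) (m : ℕ) : HasWalk E i i (m * a) := by
  induction m with
  | zero => simpa using refl E i
  | succ m ih => simpa [Nat.succ_mul] using ih.append h

theorem segment (f : ℕ → Fin n) {L : ℕ} (he : ∀ m < L, E (f m) (f (m + 1))) {p q : ℕ}
    (hpq : p ≤ q) (hq : q ≤ L) : HasWalk E (f p) (f q) (q - p) :=
  ⟨fun m => f (p + m), rfl, by simp only [Nat.add_sub_cancel' hpq],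
    fun m hm => by simpa [Nat.add_assoc] using he (p + m) (by omega)⟩

/-- Pigeonhole on the first `n + 1` vertices of the walk, then cut out the loop between the two
visits of the repeated vertex. -/
theorem exists_shortening (h : HasWalk E i j a) (ha : n ≤ a) :
    ∃ d, 0 < d ∧ d ≤ n ∧ HasWalk E i j (a - d) := by
  obtain ⟨f, h0, hfa, he⟩ := h
  obtain ⟨x, y, hxy, hf⟩ :=
    Fintype.exists_ne_map_eq_of_card_lt (fun x : Fin (n + 1) => f x) (by simp)
  wlog hlt : x < y generalizing x y
  · exact this y x hxy.symm hf.symm (lt_of_le_of_ne (not_lt.1 hlt) hxy.symm)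
  have hy := y.isLt
  have h₁ := segment f he (Nat.zero_le x) (by omega)
  have h₂ := segment f he (show (y : ℕ) ≤ a by omega) le_rfl
  rw [← hf] at h₂
  refine ⟨y - x, by omega, by omega, ?_⟩
  rw [← h0, ← hfa]
  convert h₁.append h₂ using 1
  omega

theorem reflTransGen (h : HasWalk E i j a) : ReflTransGen E i j := by
  induction a generalizing i with
  | zero => exact zero_iff.1 h ▸ ReflTransGen.refl
  | succ a ih =>
    obtain ⟨m, hm, h⟩ := succ_iff.1 h
    exact ReflTransGen.head hm (ih h)

end HasWalk

theorem Relation.ReflTransGen.exists_hasWalk {n : ℕ} {E : Fin n → Fin n → Prop} {i j : Fin n}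
    (h : ReflTransGen E i j) : ∃ a, HasWalk E i j a := by
  induction h using ReflTransGen.head_induction_on with
  | refl => exact ⟨0, HasWalk.refl E j⟩
  | head hE _ ih =>
    obtain ⟨a, ha⟩ := ih
    exact ⟨a + 1, HasWalk.succ_iff.2 ⟨_, hE, ha⟩⟩

theorem Relation.ReflTransGen.exists_crossing {V : Type*} {R : V → V → Prop} {p : V → Prop}
    {a b : V} (h : ReflTransGen R a b) (ha : ¬ p a) (hb : p b) : ∃ x y, R x y ∧ ¬ p x ∧ p y := by
  induction h with
  | refl => exact absurd hb ha
  | @tail c d _ hcd ih =>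
    by_cases hc : p c
    · exact ih hc
    · exact ⟨c, d, hcd, hc, hb⟩

namespace AperiodicAt

variable {n : ℕ} {E : Fin n → Fin n → Prop} {i : Fin n}

theorem exists_hasWalk_pos (h : AperiodicAt E i) : ∃ a, 0 < a ∧ HasWalk E i i a := by
  by_contra! hno
  exact zero_ne_one (h 0 fun a ha hw => absurd hw (hno a ha))

theorem exists_hasWalk_pos_le (h : AperiodicAt E i) : ∃ a, 0 < a ∧ a ≤ n ∧ HasWalk E i i a := by
  classical
  have hex := h.exists_hasWalk_pos
  refine ⟨Nat.find hex, (Nat.find_spec hex).1, ?_, (Nat.find_spec hex).2⟩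
  by_contra! hlt
  obtain ⟨d, hd, hdn, hw⟩ := (Nat.find_spec hex).2.exists_shortening hlt.le
  exact Nat.find_min hex (m := Nat.find hex - d) (by omega) ⟨by omega, hw⟩

end AperiodicAt

section Components

variable {V : Type*} {R : V → V → Prop} {u v w : V}

def SameComponent (R : V → V → Prop) (u v : V) : Prop :=
  ReflTransGen R u v ∧ ReflTransGen R v u

theorem SameComponent.refl (R : V → V → Prop) (u : V) : SameComponent R u u :=
  ⟨ReflTransGen.refl, ReflTransGen.refl⟩

theorem SameComponent.symm (h : SameComponent R u v) : SameComponent R v u := ⟨h.2, h.1⟩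

theorem SameComponent.trans (h₁ : SameComponent R u v) (h₂ : SameComponent R v w) :
    SameComponent R u w :=
  ⟨h₁.1.trans h₂.1, h₂.2.trans h₁.2⟩

def IsComponentUnion (R : V → V → Prop) (U : Finset V) : Prop :=
  ∀ v ∈ U, ∀ w, SameComponent R w v → w ∈ U

theorem IsComponentUnion.union [DecidableEq V] {U U' : Finset V} (hU : IsComponentUnion R U)
    (hU' : IsComponentUnion R U') : IsComponentUnion R (U ∪ U') := by
  intro v hv w hw
  rcases mem_union.1 hv with hv | hv
  · exact mem_union_left _ (hU v hv w hw)
  · exact mem_union_right _ (hU' v hv w hw)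

variable [Fintype V]

open scoped Classical in
noncomputable def component (R : V → V → Prop) (v : V) : Finset V :=
  univ.filter (SameComponent R · v)

theorem mem_component : u ∈ component R v ↔ SameComponent R u v := by
  simp [component]

theorem self_mem_component (R : V → V → Prop) (v : V) : v ∈ component R v :=
  mem_component.2 (.refl R v)

theorem isComponentUnion_component (R : V → V → Prop) (v : V) :
    IsComponentUnion R (component R v) :=
  fun _ hu _ hw => mem_component.2 (hw.trans (mem_component.1 hu))

theorem IsComponentUnion.disjoint_component {U : Finset V} (hU : IsComponentUnion R U)
    (hv : v ∉ U) : Disjoint U (component R v) :=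
  disjoint_left.2 fun _ hu hv' => hv (hU _ hu v (mem_component.1 hv').symm)

end Components

theorem AperiodicAt.exists_rel_sameComponent {n : ℕ} {E : Fin n → Fin n → Prop} {v : Fin n}
    (h : AperiodicAt E v) : ∃ w, E v w ∧ SameComponent E w v := by
  obtain ⟨a, ha, hw⟩ := h.exists_hasWalk_pos
  obtain ⟨w, hvw, hwv⟩ := HasWalk.succ_iff.1 (Nat.sub_add_cancel ha ▸ hw)
  exact ⟨w, hvw, hwv.reflTransGen, .single hvw⟩

theorem exists_lt_mul_card_add_eq {V : Type*} {Z : ℕ → Finset V} {C : Finset V} {p : ℕ}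
    (hp : 0 < p) (hZC : ∀ t, Z t ⊆ C) (hZ : ∀ t, Z t ⊆ Z (t + p)) (h0 : (Z 0).Nonempty) :
    ∃ t < p * C.card, Z (t + p) = Z t := by
  by_contra! hne
  -- then `Φ` increases at every step up to `p * #C`, beyond its bound `p * #C`
  set Φ : ℕ → ℕ := fun t => ∑ i ∈ range p, (Z (t + i)).card
  have hshift : ∀ t, Φ t + (Z (t + p)).card = Φ (t + 1) + (Z t).card := by
    intro t
    simp only [Φ, ← sum_range_succ (fun i => (Z (t + i)).card), sum_range_succ',
      Nat.add_zero, Nat.add_right_comm t 1, Nat.add_assoc]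
  have hgrow : ∀ t ≤ p * C.card, t + 1 ≤ Φ t := by
    intro t
    induction t with
    | zero =>
      intro _
      show 0 < ∑ i ∈ range p, (Z (0 + i)).card
      simpa using (card_pos.2 h0).trans_le
        (single_le_sum (f := fun i => (Z i).card) (fun _ _ => Nat.zero_le _) (mem_range.2 hp))
    | succ t ih =>
      intro ht
      have := card_lt_card ((hZ t).ssubset_of_ne (hne t (by omega)).symm)
      have := hshift t
      have := ih (by omega)
      omega
  have hbound : Φ (p * C.card) ≤ p * C.card := by
    simpa using sum_le_card_nsmul (range p) (fun i => (Z (p * C.card + i)).card) C.card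
      fun i _ => card_le_card (hZC _)
  have := hgrow _ le_rfl
  omega

section ExactWalks

variable {n : ℕ} (E : Fin n → Fin n → Prop) (r : Fin n)

open scoped Classical in
noncomputable def walkSources (t : ℕ) : Finset (Fin n) :=
  (component E r).filter (HasWalk E · r t)

open scoped Classical in
noncomputable def predecessorsIn (C S : Finset (Fin n)) : Finset (Fin n) :=
  C.filter fun u => ∃ w ∈ S, E u w

variable {E r}

theorem mem_walkSources {t : ℕ} {u : Fin n} :
    u ∈ walkSources E r t ↔ u ∈ component E r ∧ HasWalk E u r t := by
  simp [walkSources]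

theorem walkSources_add (t m : ℕ) :
    walkSources E r (t + m) = (predecessorsIn E (component E r))^[m] (walkSources E r t) := by
  induction m with
  | zero => rfl
  | succ m ih =>
    rw [iterate_succ_apply', ← ih, ← Nat.add_assoc]
    ext u
    simp only [mem_walkSources, predecessorsIn, mem_filter, HasWalk.succ_iff]
    constructor
    · rintro ⟨hu, w, huw, hw⟩
      exact ⟨hu, w, ⟨mem_component.2 ⟨hw.reflTransGen, (mem_component.1 hu).2.tail huw⟩, hw⟩, huw⟩
    · rintro ⟨hu, w, ⟨-, hw⟩, huw⟩
      exact ⟨hu, w, huw, hw⟩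

theorem walkSources_subset_add (t : ℕ) {k : ℕ} (hk : HasWalk E r r k) :
    walkSources E r t ⊆ walkSources E r (t + k) := fun _ hu =>
  mem_walkSources.2 ⟨(mem_walkSources.1 hu).1, (mem_walkSources.1 hu).2.append hk⟩

/-- The sets `walkSources E r t` form the orbit of `{r}` under the predecessor map. A closed walk
at `r` of length `p ≤ n` makes the orbit `p`-periodic before time `p * #(component E r)`; then
every closed walk length at `r` is a period, so aperiodicity leaves the period `1`. -/
theorem exists_forall_hasWalk (hap : AperiodicAt E r) :
    ∃ F < n * (component E r).card, ∀ t, F ≤ t → ∀ u ∈ component E r, HasWalk E u r t := by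
  set step := predecessorsIn E (component E r)
  obtain ⟨p, hp, hpn, hpr⟩ := hap.exists_hasWalk_pos_le
  obtain ⟨t₀, ht₀, hper⟩ := exists_lt_mul_card_add_eq (Z := walkSources E r) hp
    (fun _ _ hu => (mem_walkSources.1 hu).1)
    (fun t => walkSources_subset_add t hpr)
    ⟨r, mem_walkSources.2 ⟨self_mem_component E r, HasWalk.refl E r⟩⟩
  set x := walkSources E r t₀
  have hpx : IsPeriodicPt step p x := by
    rw [IsPeriodicPt, IsFixedPt, ← walkSources_add, hper]
  have hperiod : ∀ k, HasWalk E r r k → IsPeriodicPt step k x := by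
    intro k hk
    rw [IsPeriodicPt, IsFixedPt, ← walkSources_add]
    refine Subset.antisymm ?_ (walkSources_subset_add t₀ hk)
    calc walkSources E r (t₀ + k)
        ⊆ walkSources E r (t₀ + k + (p - 1) * k) := walkSources_subset_add _ (hk.closed_mul _)
      _ = walkSources E r (t₀ + p * k) := by
        congr 1
        obtain ⟨p, rfl⟩ := Nat.exists_eq_add_of_lt hp
        simp only [Nat.zero_add, Nat.add_sub_cancel]
        ring
      _ = x := by rw [walkSources_add, (hpx.mul_const k).eq]
  have hfix : IsFixedPt step x :=
    minimalPeriod_eq_one_iff_isFixedPt.1 (hap _ fun k _ hk => (hperiod k hk).minimalPeriod_dvd)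
  have hconst : ∀ t, t₀ ≤ t → walkSources E r t = x := by
    intro t ht
    obtain ⟨m, rfl⟩ := Nat.exists_eq_add_of_le ht
    rw [walkSources_add, (hfix.iterate m).eq]
  refine ⟨t₀, ht₀.trans_le (Nat.mul_le_mul_right _ hpn), fun t ht u hu => ?_⟩
  obtain ⟨d, hd⟩ := (mem_component.1 hu).1.exists_hasWalk
  have hu' : u ∈ walkSources E r (d + t₀ * p) :=
    mem_walkSources.2 ⟨hu, hd.append (hpr.closed_mul t₀)⟩
  rw [hconst _ (by nlinarith), ← hconst t ht] at hu'
  exact (mem_walkSources.1 hu').2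

end ExactWalks

theorem Stochastic.exists_pos {n : ℕ} {M : Matrix (Fin n) (Fin n) ℝ} (hM : Stochastic M)
    (i : Fin n) : ∃ j, 0 < M i j := by
  by_contra! h
  linarith [hM.2 i, sum_nonpos fun j (_ : j ∈ univ) => h j]

theorem Stochastic.apply_le_one {n : ℕ} {M : Matrix (Fin n) (Fin n) ℝ} (hM : Stochastic M)
    (i j : Fin n) : M i j ≤ 1 :=
  hM.2 i ▸ single_le_sum (fun k _ => hM.1 i k) (mem_univ j)

theorem CompRed.exists_pos_notMem_mem {n : ℕ} {M : Matrix (Fin n) (Fin n) ℝ} (hM : CompRed M)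
    {U : Finset (Fin n)} {v w : Fin n} (hvw : 0 < M v w) (hv : v ∈ U) (hw : w ∉ U) :
    ∃ a ∉ U, ∃ b ∈ U, 0 < M a b := by
  obtain ⟨k, hk⟩ := hM v w hvw
  obtain ⟨a, b, hab, ha, hb⟩ := hk.reflTransGen.exists_crossing hw hv
  exact ⟨a, ha, b, hb, hab⟩

section BackProd

variable {n : ℕ} {A : ℕ → Matrix (Fin n) (Fin n) ℝ}

theorem backProd_zero_succ_apply (t : ℕ) (u w : Fin n) :
    backProd A 0 (t + 1) u w = ∑ z, A (t + 1) u z * backProd A 0 t z w := by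
  simp [backProd, Matrix.mul_apply]

theorem backProd_apply_eq_zero {U : Finset (Fin n)} {l : ℕ}
    (hU : ∀ s, l < s → ∀ v ∈ U, ∀ w ∉ U, A s v w = 0) (m : ℕ) {u w : Fin n} (hu : u ∈ U)
    (hw : w ∉ U) : backProd A l m u w = 0 := by
  induction m generalizing u with
  | zero => exact Matrix.one_apply_ne fun h => hw (h ▸ hu)
  | succ m ih =>
    simp only [backProd, Matrix.mul_apply]
    refine sum_eq_zero fun z _ => ?_
    by_cases hz : z ∈ U
    · rw [ih hz, mul_zero]
    · rw [hU _ (by omega) u hu z hz, zero_mul]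

variable (hA : ∀ k, 1 ≤ k → ∀ i j, 0 ≤ A k i j)
include hA

theorem backProd_nonneg (t : ℕ) (u w : Fin n) : 0 ≤ backProd A 0 t u w := by
  induction t generalizing u with
  | zero => rw [backProd, Matrix.one_apply]; split_ifs <;> norm_num
  | succ t ih =>
    rw [backProd_zero_succ_apply]
    exact sum_nonneg fun z _ => mul_nonneg (hA _ (by omega) _ _) (ih z)

theorem mul_le_backProd_succ_apply {α : ℝ} {t : ℕ} {u z : Fin n} (hα : α ≤ A (t + 1) u z)
    (w : Fin n) : α * backProd A 0 t z w ≤ backProd A 0 (t + 1) u w := by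
  rw [backProd_zero_succ_apply]
  exact (mul_le_mul_of_nonneg_right hα (backProd_nonneg hA t z w)).trans
    (single_le_sum (f := fun z => A (t + 1) u z * backProd A 0 t z w)
      (fun z _ => mul_nonneg (hA _ (by omega) _ _) (backProd_nonneg hA t z w)) (mem_univ z))

theorem pow_mul_le_backProd_apply_of_hasWalk {α : ℝ} (hα : 0 ≤ α) {E : Fin n → Fin n → Prop}
    (hE : ∀ s, 1 ≤ s → ∀ u z, E u z → α ≤ A s u z) {u z : Fin n} {L : ℕ}
    (hw : HasWalk E u z L) (t : ℕ) (w : Fin n) :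
    α ^ L * backProd A 0 t z w ≤ backProd A 0 (t + L) u w := by
  induction L generalizing u with
  | zero => rw [HasWalk.zero_iff.1 hw]; simp
  | succ L ih =>
    obtain ⟨m, hum, hw⟩ := HasWalk.succ_iff.1 hw
    calc α ^ (L + 1) * backProd A 0 t z w = α * (α ^ L * backProd A 0 t z w) := by ring
      _ ≤ α * backProd A 0 (t + L) m w := mul_le_mul_of_nonneg_left (ih hw) hα
      _ ≤ backProd A 0 (t + (L + 1)) u w :=
        mul_le_backProd_succ_apply hA (hE _ (by omega) u m hum) w

theorem exists_pos_apply_of_ergodic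
    (hep : ∀ k, 1 ≤ k → ∃ K, k ≤ K ∧
      ∀ i j, 0 < (∑ k' ∈ Finset.Icc k K, backProd A (k - 1) (k' + 1 - k)) i j)
    {U : Finset (Fin n)} (hne : U.Nonempty) (huniv : U ≠ univ) (T : ℕ) :
    ∃ s, T < s ∧ ∃ v ∈ U, ∃ w ∉ U, 0 < A s v w := by
  by_contra! h
  obtain ⟨u, hu⟩ := hne
  obtain ⟨w, hw⟩ := not_forall.1 (mt eq_univ_iff_forall.2 huniv)
  obtain ⟨K, -, hK⟩ := hep (T + 1) (by omega)
  have hzero := fun s hs v hv w hw => le_antisymm (h s hs v hv w hw) (hA s (by omega) v w)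
  have := hK u w
  rw [Matrix.sum_apply, sum_eq_zero fun k _ => by
    rw [Nat.add_sub_cancel]; exact backProd_apply_eq_zero hzero _ hu hw] at this
  exact this.false

end BackProd

theorem le_backProd_apply_of_no_exit {n : ℕ} {A : ℕ → Matrix (Fin n) (Fin n) ℝ}
    (hA : ∀ k, 1 ≤ k → Stochastic (A k)) {U : Finset (Fin n)} {T T' : ℕ} (hTT' : T ≤ T')
    (hno : ∀ s, T < s → s ≤ T' → ∀ v ∈ U, ∀ w ∉ U, A s v w = 0) {β : ℝ} {j : Fin n}
    (hb : ∀ v ∈ U, β ≤ backProd A 0 T v j) : ∀ v ∈ U, β ≤ backProd A 0 T' v j := by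
  induction T', hTT' using Nat.le_induction with
  | base => exact hb
  | succ t ht ih =>
    intro v hv
    have hAt := hA (t + 1) (by omega)
    rw [backProd_zero_succ_apply]
    calc β = ∑ z, A (t + 1) v z * β := by rw [← sum_mul, hAt.2 v, one_mul]
      _ ≤ ∑ z, A (t + 1) v z * backProd A 0 t z j := sum_le_sum fun z _ => by
        by_cases hz : z ∈ U
        · exact mul_le_mul_of_nonneg_left (ih (fun s hs _ => hno s hs (by omega)) z hz)
            (hAt.1 v z)
        · simp [hno (t + 1) (by omega) le_rfl v hv z hz]

structure ChainHypotheses {n : ℕ} (A : ℕ → Matrix (Fin n) (Fin n) ℝ) (H : Fin n → Fin n → Prop)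
    (α : ℝ) : Prop where
  pos : 0 < α
  stochastic : ∀ k, 1 ≤ k → Stochastic (A k)
  le_of_pos : ∀ k, 1 ≤ k → ∀ i j, 0 < A k i j → α ≤ A k i j
  ergodic : ∀ k, 1 ≤ k → ∃ K, k ≤ K ∧
    ∀ i j, 0 < (∑ k' ∈ Finset.Icc k K, backProd A (k - 1) (k' + 1 - k)) i j
  compRed : ∀ k, 1 ≤ k → CompRed (A k)
  subgraph : ∀ k, 1 ≤ k → ∀ i j, H i j → 0 < A k i j
  aperiodic : ∀ i, AperiodicAt H i

namespace ChainHypotheses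

variable {n : ℕ} {A : ℕ → Matrix (Fin n) (Fin n) ℝ} {H : Fin n → Fin n → Prop} {α : ℝ}
  (h : ChainHypotheses A H α)
include h

theorem nonneg_apply : ∀ k, 1 ≤ k → ∀ u w, 0 ≤ A k u w := fun k hk => (h.stochastic k hk).1

theorem le_apply_of_rel : ∀ k, 1 ≤ k → ∀ u w, H u w → α ≤ A k u w :=
  fun k hk u w huw => h.le_of_pos k hk u w (h.subgraph k hk u w huw)

theorem le_one (i : Fin n) : α ≤ 1 := by
  obtain ⟨w, hw⟩ := (h.stochastic 1 le_rfl).exists_pos i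
  exact (h.le_of_pos 1 le_rfl i w hw).trans ((h.stochastic 1 le_rfl).apply_le_one i w)

theorem pow_mul_le_backProd_apply {j : Fin n} {U : Finset (Fin n)}
    (hU : IsComponentUnion H U) {t : ℕ} {β : ℝ} (hb : ∀ v ∈ U, β ≤ backProd A 0 t v j) (m : ℕ) :
    ∀ v ∈ U, α ^ m * β ≤ backProd A 0 (t + m) v j := by
  induction m with
  | zero => simpa using hb
  | succ m ih =>
    intro v hv
    obtain ⟨w, hvw, hwv⟩ := (h.aperiodic v).exists_rel_sameComponent
    calc α ^ (m + 1) * β = α * (α ^ m * β) := by ring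
      _ ≤ α * backProd A 0 (t + m) w j := mul_le_mul_of_nonneg_left (ih w (hU v hv w hwv)) h.pos.le
      _ ≤ backProd A 0 (t + (m + 1)) v j :=
        mul_le_backProd_succ_apply h.nonneg_apply (h.le_apply_of_rel _ (by omega) v w hvw) j

theorem exists_pow_le_backProd_apply_union {j : Fin n} {U : Finset (Fin n)}
    (hU : IsComponentUnion H U) (hne : U.Nonempty) (huniv : U ≠ univ) {T e : ℕ}
    (hb : ∀ v ∈ U, α ^ e ≤ backProd A 0 T v j) :
    ∃ a ∉ U, ∃ T', ∀ v ∈ U ∪ component H a,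
      α ^ (e + n * (component H a).card) ≤ backProd A 0 T' v j := by
  classical
  have hleak := exists_pos_apply_of_ergodic h.nonneg_apply h.ergodic hne huniv T
  obtain ⟨hTs, v, hv, w, hw, hvw⟩ := Nat.find_spec hleak
  -- `s + 1` is the first time after `T` at which a row of `U` has mass outside `U`
  set s := Nat.find hleak - 1
  have hs : s + 1 = Nat.find hleak := by omega
  have hquiet : ∀ s', T < s' → s' ≤ s → ∀ v ∈ U, ∀ w ∉ U, A s' v w = 0 := by
    intro s' hTs' hs' v hv w hw
    have := Nat.find_min hleak (m := s') (by omega)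
    push Not at this
    exact le_antisymm (this hTs' v hv w hw) (h.nonneg_apply s' (by omega) v w)
  have hbs := le_backProd_apply_of_no_exit h.stochastic (by omega) hquiet hb
  obtain ⟨a, ha, b, hbU, hab⟩ := (h.compRed _ (by omega)).exists_pos_notMem_mem hvw hv hw
  rw [← hs] at hab
  have hseed : α * α ^ e ≤ backProd A 0 (s + 1) a j :=
    (mul_le_mul_of_nonneg_left (hbs b hbU) h.pos.le).trans
      (mul_le_backProd_succ_apply h.nonneg_apply (h.le_of_pos _ (by omega) _ _ hab) j)
  have hbU : ∀ v ∈ U, α * α ^ e ≤ backProd A 0 (s + 1) v j := by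
    simpa using h.pow_mul_le_backProd_apply hU hbs 1
  obtain ⟨F, hF, hwalk⟩ := exists_forall_hasWalk (h.aperiodic a)
  have hexp : α ^ (e + n * (component H a).card) ≤ α ^ F * (α * α ^ e) := by
    rw [← pow_succ', ← pow_add]
    exact pow_le_pow_of_le_one h.pos.le (h.le_one j) (by omega)
  refine ⟨a, ha, s + 1 + F, fun v hv => hexp.trans ?_⟩
  rcases mem_union.1 hv with hv | hv
  · exact h.pow_mul_le_backProd_apply hU hbU F v hv
  · exact (mul_le_mul_of_nonneg_left hseed (pow_nonneg h.pos.le F)).trans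
      (pow_mul_le_backProd_apply_of_hasWalk h.nonneg_apply h.pos.le h.le_apply_of_rel
        (hwalk F le_rfl v hv) (s + 1) j)

theorem exists_forall_pow_le_backProd_apply {j : Fin n} {U : Finset (Fin n)}
    (hU : IsComponentUnion H U) (hne : U.Nonempty) {T : ℕ}
    (hb : ∀ v ∈ U, α ^ (n * U.card) ≤ backProd A 0 T v j) :
    ∃ T', ∀ v, α ^ (n * n) ≤ backProd A 0 T' v j := by
  classical
  by_cases huniv : U = univ
  · subst huniv
    exact ⟨T, fun v => by simpa using hb v (mem_univ v)⟩
  obtain ⟨a, ha, T', hT'⟩ := h.exists_pow_le_backProd_apply_union hU hne huniv hb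
  have hcard : (U ∪ component H a).card = U.card + (component H a).card :=
    card_union_of_disjoint (hU.disjoint_component ha)
  exact exists_forall_pow_le_backProd_apply (hU.union (isComponentUnion_component H a))
    (hne.mono subset_union_left) fun v hv => by rw [hcard, Nat.mul_add]; exact hT' v hv
termination_by n - U.card
decreasing_by
  have := card_le_univ (U ∪ component H a)
  have := card_pos.2 ⟨a, self_mem_component H a⟩
  simp only [Fintype.card_fin] at *
  omega

theorem eventually_pow_le_backProd_apply (j : Fin n) :
    ∀ᶠ t in atTop, ∀ v, α ^ (n * n) ≤ backProd A 0 t v j := by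
  obtain ⟨F, hF, hwalk⟩ := exists_forall_hasWalk (h.aperiodic j)
  have hinit : ∀ v ∈ component H j,
      α ^ (n * (component H j).card) ≤ backProd A 0 F v j := fun v hv =>
    calc α ^ (n * (component H j).card) ≤ α ^ F * backProd A 0 0 j j := by
          simpa [backProd] using pow_le_pow_of_le_one h.pos.le (h.le_one j) hF.le
      _ ≤ backProd A 0 F v j := by
          simpa using pow_mul_le_backProd_apply_of_hasWalk h.nonneg_apply h.pos.le
            h.le_apply_of_rel (hwalk F le_rfl v hv) 0 j
  obtain ⟨T, hT⟩ := h.exists_forall_pow_le_backProd_apply (isComponentUnion_component H j)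
    ⟨j, self_mem_component H j⟩ hinit
  exact eventually_atTop.2 ⟨T, fun t ht v => le_backProd_apply_of_no_exit h.stochastic ht
    (fun _ _ _ _ _ w hw => absurd (mem_univ w) hw) (fun v _ => hT v) v (mem_univ v)⟩

end ChainHypotheses

theorem stmt15_general {n : ℕ} (A : ℕ → Matrix (Fin n) (Fin n) ℝ)
    (H : Fin n → Fin n → Prop) (α : ℝ) (hα : 0 < α)
    (hstoch : ∀ k, 1 ≤ k → Stochastic (A k))
    (hlb : ∀ k, 1 ≤ k → ∀ i j, 0 < A k i j → α ≤ A k i j)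
    (hep : ∀ k, 1 ≤ k → ∃ K, k ≤ K ∧
      ∀ i j, 0 < (∑ k' ∈ Finset.Icc k K, backProd A (k - 1) (k' + 1 - k)) i j)
    (hcr : ∀ k, 1 ≤ k → CompRed (A k))
    (hsub : ∀ k, 1 ≤ k → ∀ i j, H i j → 0 < A k i j)
    (hap : ∀ i : Fin n, AperiodicAt H i) :
    ∃ K, ∀ k, K ≤ k → ∀ i j, α ^ (n * (n ^ 2 + 3 - 2 * n)) ≤ backProd A 0 k i j := by
  have h : ChainHypotheses A H α := ⟨hα, hstoch, hlb, hep, hcr, hsub, hap⟩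
  obtain ⟨K, hK⟩ := eventually_atTop.1 (eventually_all.2 h.eventually_pow_le_backProd_apply)
  refine ⟨K, fun k hk i j => le_trans ?_ (hK k hk j i)⟩
  have hn : 3 * n ≤ n ^ 2 + 3 := by nlinarith [sq_nonneg ((n : ℤ) - 2)]
  exact pow_le_pow_of_le_one hα.le (h.le_one i) (Nat.mul_le_mul_left n (by omega))

theorem stmt15 {n : ℕ} (A : ℕ → Matrix (Fin n) (Fin n) ℝ)
    (H : Fin n → Fin n → Prop) (α : ℝ) (hα : 0 < α)
    (hstoch : ∀ k, 1 ≤ k → Stochastic (A k))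
    (hlb : ∀ k, 1 ≤ k → ∀ i j, 0 < A k i j → α ≤ A k i j)
    (hep : ∀ k, 1 ≤ k → ∃ K, k ≤ K ∧
      ∀ i j, 0 < (∑ k' ∈ Finset.Icc k K, backProd A (k - 1) (k' + 1 - k)) i j)
    (hcr : ∀ k, 1 ≤ k → CompRed (A k))
    (hsub : ∀ k, 1 ≤ k → ∀ i j, H i j → 0 < A k i j)
    (hns : ∀ i : Fin n, ∃ j, H i j)
    (hap : ∀ i : Fin n, AperiodicAt H i) :
    ∃ K, ∀ k, K ≤ k → ∀ i j, α ^ (n * (n ^ 2 + 3 - 2 * n)) ≤ backProd A 0 k i j :=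
  stmt15_general A H α hα hstoch hlb hep hcr hsub hap
end

section
/- Let A(k), k ≥ 1, be n×n row-stochastic matrices satisfying: (1) positive entries uniformly bounded below by some α > 0; (2) for every k there exists K ≥ k such that Σ_{k'=k}^{K} A(k')·A(k'−1)···A(k) has all entries positive; (3) each A(k) is completely reducible; (4) there exists an aperiodic digraph H without sinks on node set {1,…,n} that is a subgraph of every G(A(k)). Then the backward products P(k) = A(k)·A(k−1)···A(1) converge entrywise to a row-stochastic matrix of rank 1. -/
open Matrix Filter

/-!
Aperiodicity gives a `T` such that every node has closed `H`-walks of every length `≥ T`.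
Grouped into windows of length `T`, the chain has a positive diagonal, positive entries at
least `α ^ T`, stays completely reducible (an edge of one factor becomes a three-step path of
the window product, the closed `H`-walks absorbing the other factors) and every node still
eventually influences every other one.

For such a chain a limit point of the uniform vector pulled back through longer and longer
products is an absolute probability sequence `π`. It is bounded below by `β ^ (n - 1)`: by
complete reducibility, the `π`-mass of a set is constant until the set receives weight from
outside, and then it is at least `β` times the mass of a larger set. Along a column `x` of the
backward products, the Lyapunov function `∑ π t i * x t i ^ 2` converges, so eventually every
edge joins almost equal values. A gap in the values of `x` would then never be crossed again,
contradicting the connectivity; hence the column reaches consensus. The factors left over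
between two window boundaries only average the rows of an almost constant column.
-/

open Relation

namespace Stochastic

variable {n : ℕ} {P Q : Matrix (Fin n) (Fin n) ℝ}

lemma one : Stochastic (1 : Matrix (Fin n) (Fin n) ℝ) :=
  ⟨fun i j => by by_cases h : i = j <;> simp [Matrix.one_apply, h], fun i => by
    simp [Matrix.one_apply]⟩

lemma mul (hP : Stochastic P) (hQ : Stochastic Q) : Stochastic (P * Q) := by
  refine ⟨fun i j => ?_, fun i => ?_⟩
  · rw [Matrix.mul_apply]
    exact Finset.sum_nonneg fun c _ => mul_nonneg (hP.1 i c) (hQ.1 c j)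
  · simp only [Matrix.mul_apply]
    rw [Finset.sum_comm]
    simp_rw [← Finset.mul_sum, hQ.2, mul_one, hP.2]

lemma le_one (hP : Stochastic P) (i j : Fin n) : P i j ≤ 1 :=
  (Finset.single_le_sum (fun c _ => hP.1 i c) (Finset.mem_univ j)).trans_eq (hP.2 i)

lemma vecMul_mem_stdSimplex (hP : Stochastic P) {p : Fin n → ℝ}
    (hp : p ∈ stdSimplex ℝ (Fin n)) : p ᵥ* P ∈ stdSimplex ℝ (Fin n) := by
  refine ⟨fun j => ?_, ?_⟩
  · rw [Matrix.vecMul_apply_eq_sum]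
    exact Finset.sum_nonneg fun i _ => mul_nonneg (hp.1 i) (hP.1 i j)
  · simp only [Matrix.vecMul_apply_eq_sum]
    rw [Finset.sum_comm]
    simp_rw [← Finset.mul_sum, hP.2, mul_one, hp.2]

lemma mulVec_sub_const (hP : Stochastic P) (x : Fin n → ℝ) (c : ℝ) (i : Fin n) :
    (P *ᵥ x) i - c = ∑ j, P i j * (x j - c) := by
  simp only [Matrix.mulVec_apply_eq_sum, mul_sub, Finset.sum_sub_distrib, ← Finset.sum_mul,
    hP.2, one_mul]

lemma mulVec_le (hP : Stochastic P) {x : Fin n → ℝ} {c : ℝ} {i : Fin n}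
    (h : ∀ j, 0 < P i j → x j ≤ c) : (P *ᵥ x) i ≤ c := by
  rw [← sub_nonpos, hP.mulVec_sub_const]
  refine Finset.sum_nonpos fun j _ => ?_
  rcases (hP.1 i j).eq_or_lt with h0 | hpos
  · simp [← h0]
  · exact mul_nonpos_of_nonneg_of_nonpos hpos.le (sub_nonpos.2 (h j hpos))

lemma le_mulVec (hP : Stochastic P) {x : Fin n → ℝ} {c : ℝ} {i : Fin n}
    (h : ∀ j, 0 < P i j → c ≤ x j) : c ≤ (P *ᵥ x) i := by
  have := hP.mulVec_le (x := -x) (c := -c) (i := i) fun j hj => neg_le_neg (h j hj)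
  rwa [Matrix.mulVec_neg, Pi.neg_apply, neg_le_neg_iff] at this

lemma lt_mulVec (hP : Stochastic P) {x : Fin n → ℝ} {c : ℝ} {i : Fin n}
    (h : ∀ j, 0 < P i j → c < x j) : c < (P *ᵥ x) i := by
  rw [← sub_pos, hP.mulVec_sub_const]
  obtain ⟨j, -, hj⟩ := Finset.exists_lt_of_sum_lt (s := Finset.univ) (f := 0) (g := P i)
    (by simp [hP.2 i])
  refine Finset.sum_pos' (fun k _ => ?_) ⟨j, Finset.mem_univ j, mul_pos hj (sub_pos.2 (h j hj))⟩
  rcases (hP.1 i k).eq_or_lt with h0 | hpos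
  · simp [← h0]
  · exact mul_nonneg hpos.le (sub_pos.2 (h k hpos)).le

lemma mulVec_lt (hP : Stochastic P) {x : Fin n → ℝ} {c : ℝ} {i : Fin n}
    (h : ∀ j, 0 < P i j → x j < c) : (P *ᵥ x) i < c := by
  have := hP.lt_mulVec (x := -x) (c := -c) (i := i) fun j hj => neg_lt_neg (h j hj)
  rwa [Matrix.mulVec_neg, Pi.neg_apply, neg_lt_neg_iff] at this

end Stochastic

section Walks

variable {n : ℕ} {E : Fin n → Fin n → Prop}

lemma hasWalk_zero_iff {i j : Fin n} : HasWalk E i j 0 ↔ i = j :=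
  ⟨fun ⟨f, h0, h1, _⟩ => h0 ▸ h1, fun h => ⟨fun _ => j, h ▸ rfl, rfl, by omega⟩⟩

lemma hasWalk_succ_iff {i j : Fin n} {m : ℕ} :
    HasWalk E i j (m + 1) ↔ ∃ c, E i c ∧ HasWalk E c j m := by
  constructor
  · rintro ⟨f, rfl, rfl, hf⟩
    exact ⟨f 1, hf 0 (by omega), fun t => f (t + 1), rfl, rfl,
      fun t ht => hf (t + 1) (by omega)⟩
  · rintro ⟨c, hic, f, rfl, rfl, hf⟩
    refine ⟨fun t => Nat.casesOn t i f, rfl, rfl, fun t ht => ?_⟩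
    cases t with
    | zero => exact hic
    | succ t => exact hf t (by omega)

lemma hasWalk_add_iff {i j : Fin n} {a b : ℕ} :
    HasWalk E i j (a + b) ↔ ∃ c, HasWalk E i c a ∧ HasWalk E c j b := by
  induction a generalizing i with
  | zero => simp [hasWalk_zero_iff]
  | succ a ih =>
    rw [Nat.add_right_comm, hasWalk_succ_iff]
    simp only [ih, hasWalk_succ_iff]
    constructor
    · rintro ⟨c, hic, d, hcd, hdj⟩
      exact ⟨d, ⟨c, hic, hcd⟩, hdj⟩
    · rintro ⟨d, ⟨c, hic, hcd⟩, hdj⟩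
      exact ⟨c, hic, d, hcd, hdj⟩

lemma exists_hasWalk_iff_reflTransGen {i j : Fin n} :
    (∃ m, HasWalk E i j m) ↔ ReflTransGen E i j := by
  constructor
  · rintro ⟨m, h⟩
    induction m generalizing i with
    | zero => exact (hasWalk_zero_iff.1 h) ▸ ReflTransGen.refl
    | succ m ih =>
      obtain ⟨c, hic, hcj⟩ := hasWalk_succ_iff.1 h
      exact ReflTransGen.head hic (ih hcj)
  · intro h
    induction h using ReflTransGen.head_induction_on with
    | refl => exact ⟨0, hasWalk_zero_iff.2 rfl⟩
    | head hic _ ih =>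
      obtain ⟨m, hm⟩ := ih
      exact ⟨m + 1, hasWalk_succ_iff.2 ⟨_, hic, hm⟩⟩

lemma compRed_iff {P : Matrix (Fin n) (Fin n) ℝ} :
    CompRed P ↔ ∀ i j, 0 < P i j → ReflTransGen (fun a b => 0 < P a b) j i := by
  simp only [CompRed, exists_hasWalk_iff_reflTransGen]

lemma Relation.ReflTransGen.exists_boundary_edge {S : Finset (Fin n)} {i j : Fin n}
    (h : ReflTransGen E i j) (hi : i ∉ S) (hj : j ∈ S) :
    ∃ a ∉ S, ∃ b ∈ S, E a b := by
  induction h with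
  | refl => exact absurd hj hi
  | @tail b c _ hbc ih =>
    by_cases hb : b ∈ S
    · exact ih hb
    · exact ⟨b, hb, c, hj, hbc⟩

lemma AperiodicAt.eventually_hasWalk {i : Fin n} (h : AperiodicAt E i) :
    ∀ᶠ m in atTop, HasWalk E i i m := by
  let closedWalks : AddSubmonoid ℕ :=
    { carrier := {m | HasWalk E i i m}
      zero_mem' := hasWalk_zero_iff.2 rfl
      add_mem' := fun ha hb => hasWalk_add_iff.2 ⟨i, ha, hb⟩ }
  have hgcd : Nat.setGcd closedWalks = 1 :=
    h _ fun k _ hk => Nat.setGcd_dvd_of_mem hk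
  obtain ⟨N, hN⟩ := Nat.exists_mem_closure_of_ge (closedWalks : Set ℕ)
  refine eventually_atTop.2 ⟨N, fun m hm => ?_⟩
  have := hN m hm (hgcd ▸ one_dvd m)
  rwa [AddSubmonoid.closure_eq] at this

end Walks

section NonnegMatrix

variable {n : ℕ} {P Q : Matrix (Fin n) (Fin n) ℝ}

lemma mul_le_mul_apply (hP : ∀ i j, 0 ≤ P i j) (hQ : ∀ i j, 0 ≤ Q i j) (i c j : Fin n) :
    P i c * Q c j ≤ (P * Q) i j :=
  Finset.single_le_sum (f := fun k => P i k * Q k j) (fun k _ => mul_nonneg (hP i k) (hQ k j))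
    (Finset.mem_univ c)

lemma mul_apply_pos (hP : ∀ i j, 0 ≤ P i j) (hQ : ∀ i j, 0 ≤ Q i j) {i c j : Fin n}
    (hic : 0 < P i c) (hcj : 0 < Q c j) : 0 < (P * Q) i j :=
  (mul_pos hic hcj).trans_le (mul_le_mul_apply hP hQ i c j)

lemma exists_pos_of_mul_apply_pos (hP : ∀ i j, 0 ≤ P i j) (hQ : ∀ i j, 0 ≤ Q i j)
    {i j : Fin n} (h : 0 < (P * Q) i j) : ∃ c, 0 < P i c ∧ 0 < Q c j := by
  rw [Matrix.mul_apply] at h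
  obtain ⟨c, -, hc⟩ := Finset.exists_lt_of_sum_lt (s := Finset.univ) (f := 0)
    (g := fun c => P i c * Q c j) (by simpa using h)
  exact ⟨c, (hP i c).lt_of_ne fun h0 => by simp [← h0] at hc,
    (hQ c j).lt_of_ne fun h0 => by simp [← h0] at hc⟩

end NonnegMatrix

section BackProd

variable {n : ℕ} {A : ℕ → Matrix (Fin n) (Fin n) ℝ}

lemma backProd_one (A : ℕ → Matrix (Fin n) (Fin n) ℝ) (l : ℕ) :
    backProd A l 1 = A (l + 1) := by
  simp [backProd]

lemma backProd_add (A : ℕ → Matrix (Fin n) (Fin n) ℝ) (l a b : ℕ) :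
    backProd A l (a + b) = backProd A (l + a) b * backProd A l a := by
  induction b with
  | zero => simp [backProd]
  | succ b ih => rw [← add_assoc, backProd, ih, backProd, Matrix.mul_assoc, add_assoc l a b]

lemma stochastic_backProd (hA : ∀ k, 1 ≤ k → Stochastic (A k)) (l m : ℕ) :
    Stochastic (backProd A l m) := by
  induction m with
  | zero => exact Stochastic.one
  | succ m ih => exact (hA _ (by omega)).mul ih

lemma backProd_pos_of_hasWalk {E : Fin n → Fin n → Prop}
    (hA : ∀ k, 1 ≤ k → Stochastic (A k))
    (hE : ∀ k, 1 ≤ k → ∀ i j, E i j → 0 < A k i j) (l : ℕ) {m : ℕ} {i j : Fin n}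
    (h : HasWalk E i j m) : 0 < backProd A l m i j := by
  induction m generalizing i with
  | zero => simp [backProd, hasWalk_zero_iff.1 h, Matrix.one_apply]
  | succ m ih =>
    obtain ⟨c, hic, hcj⟩ := hasWalk_succ_iff.1 h
    exact mul_apply_pos (hA _ (by omega)).1 (stochastic_backProd hA l m).1
      (hE _ (by omega) i c hic) (ih hcj)

lemma reflTransGen_of_backProd_pos {R : Fin n → Fin n → Prop}
    (hA : ∀ k, 1 ≤ k → Stochastic (A k)) {l m : ℕ}
    (hR : ∀ r, l < r → r ≤ l + m → ∀ a b, 0 < A r a b → R a b) {i j : Fin n}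
    (h : 0 < backProd A l m i j) : ReflTransGen R i j := by
  induction m generalizing i with
  | zero =>
    rcases eq_or_ne i j with rfl | hij
    · exact ReflTransGen.refl
    · simp [backProd, Matrix.one_apply_ne hij] at h
  | succ m ih =>
    obtain ⟨c, hic, hcj⟩ :=
      exists_pos_of_mul_apply_pos (hA _ (by omega)).1 (stochastic_backProd hA l m).1 h
    exact ReflTransGen.head (hR _ (by omega) (by omega) i c hic)
      (ih (fun r hr hr' => hR r hr (by omega)) hcj)

lemma exists_backProd_pos (hep : ∀ k, 1 ≤ k → ∃ K, k ≤ K ∧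
      ∀ i j, 0 < (∑ k' ∈ Finset.Icc k K, backProd A (k - 1) (k' + 1 - k)) i j)
    (l : ℕ) (i j : Fin n) : ∃ m, 0 < backProd A l m i j := by
  obtain ⟨K, -, hK⟩ := hep (l + 1) (by omega)
  have := hK i j
  rw [Matrix.sum_apply, Nat.add_sub_cancel] at this
  obtain ⟨k', -, hk'⟩ := Finset.exists_lt_of_sum_lt (f := 0)
    (g := fun k' => backProd A l (k' + 1 - (l + 1)) i j) (by simpa using this)
  exact ⟨_, hk'⟩

lemma pow_le_backProd_of_pos {α : ℝ} (hA : ∀ k, 1 ≤ k → Stochastic (A k)) (hα : 0 ≤ α)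
    (hlb : ∀ k, 1 ≤ k → ∀ i j, 0 < A k i j → α ≤ A k i j) {l m : ℕ} {i j : Fin n}
    (h : 0 < backProd A l m i j) : α ^ m ≤ backProd A l m i j := by
  induction m generalizing i with
  | zero =>
    rcases eq_or_ne i j with rfl | hij
    · simp [backProd]
    · simp [backProd, Matrix.one_apply_ne hij] at h
  | succ m ih =>
    have hAk := hA (l + m + 1) (by omega)
    obtain ⟨c, hic, hcj⟩ := exists_pos_of_mul_apply_pos hAk.1 (stochastic_backProd hA l m).1 h
    calc α ^ (m + 1) = α * α ^ m := pow_succ' α m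
      _ ≤ A (l + m + 1) i c * backProd A l m c j :=
        mul_le_mul (hlb _ (by omega) i c hic) (ih hcj) (pow_nonneg hα m) (hAk.1 i c)
      _ ≤ backProd A l (m + 1) i j :=
        mul_le_mul_apply hAk.1 (stochastic_backProd hA l m).1 i c j

end BackProd

def windowProd {n : ℕ} (A : ℕ → Matrix (Fin n) (Fin n) ℝ) (T t : ℕ) :
    Matrix (Fin n) (Fin n) ℝ :=
  backProd A (T * (t - 1)) T

section WindowProd

variable {n : ℕ} {A : ℕ → Matrix (Fin n) (Fin n) ℝ} {H : Fin n → Fin n → Prop} {T : ℕ}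

lemma backProd_windowProd (A : ℕ → Matrix (Fin n) (Fin n) ℝ) (T l m : ℕ) :
    backProd (windowProd A T) l m = backProd A (T * l) (T * m) := by
  induction m with
  | zero => rfl
  | succ m ih =>
    rw [backProd, ih, Nat.mul_succ, backProd_add, windowProd, Nat.add_sub_cancel, Nat.mul_add]

lemma stochastic_windowProd (hA : ∀ k, 1 ≤ k → Stochastic (A k)) (T t : ℕ) :
    Stochastic (windowProd A T t) :=
  stochastic_backProd hA _ _

lemma windowProd_diag_pos (hA : ∀ k, 1 ≤ k → Stochastic (A k))
    (hH : ∀ k, 1 ≤ k → ∀ i j, H i j → 0 < A k i j) (hT : ∀ i, HasWalk H i i T) (t : ℕ)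
    (i : Fin n) : 0 < windowProd A T t i i :=
  backProd_pos_of_hasWalk hA hH _ (hT i)

/-- The closed `H`-walks at `a` and `b` absorb the other factors of the window, giving a path
`a → z → q → b`. -/
lemma reflTransGen_backProd_of_pos (hA : ∀ k, 1 ≤ k → Stochastic (A k))
    (hH : ∀ k, 1 ≤ k → ∀ i j, H i j → 0 < A k i j)
    (hT : ∀ m, T ≤ m → ∀ i, HasWalk H i i m) {l e d : ℕ} (hT_eq : e + 1 + d = T)
    {a b : Fin n} (hab : 0 < A (l + e + 1) a b) :
    ReflTransGen (fun x y => 0 < backProd A l T x y) a b := by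
  obtain ⟨z, haz, hza⟩ := hasWalk_add_iff.1 (hT (T + d) (by omega) a)
  obtain ⟨q, hbq, hqb⟩ := hasWalk_add_iff.1 (hT (e + T) (by omega) b)
  have hAr := hA (l + e + 1) (by omega)
  have hX := stochastic_backProd hA (l + e + 1) d
  have hsplit : backProd A l T = backProd A (l + e + 1) d * A (l + e + 1) * backProd A l e := by
    rw [← hT_eq, backProd_add, ← add_assoc, Matrix.mul_assoc]
    rfl
  have hzq : 0 < backProd A l T z q := by
    rw [hsplit]
    exact mul_apply_pos (hX.mul hAr).1 (stochastic_backProd hA l e).1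
      (mul_apply_pos hX.1 hAr.1 (backProd_pos_of_hasWalk hA hH _ hza) hab)
      (backProd_pos_of_hasWalk hA hH l hbq)
  exact .tail (.tail (.single (backProd_pos_of_hasWalk hA hH l haz)) hzq)
    (backProd_pos_of_hasWalk hA hH l hqb)

lemma compRed_windowProd (hA : ∀ k, 1 ≤ k → Stochastic (A k))
    (hH : ∀ k, 1 ≤ k → ∀ i j, H i j → 0 < A k i j)
    (hT : ∀ m, T ≤ m → ∀ i, HasWalk H i i m) (hcr : ∀ k, 1 ≤ k → CompRed (A k))
    (t : ℕ) :
    CompRed (windowProd A T t) := by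
  set l := T * (t - 1)
  have hedge : ∀ r, l < r → r ≤ l + T → ∀ a b, 0 < A r a b →
      ReflTransGen (Function.swap fun x y => 0 < windowProd A T t x y) a b := by
    intro r hr hr' a b hab
    have hba := reflTransGen_swap.2 (compRed_iff.1 (hcr r (by omega)) a b hab)
    refine reflTransGen_closed (fun x y hxy => ?_) a b hba
    exact reflTransGen_swap.2 (reflTransGen_backProd_of_pos hA hH hT (e := r - l - 1)
      (d := l + T - r) (by omega) (by rwa [show l + (r - l - 1) + 1 = r by omega]))
  rw [compRed_iff]
  intro u v huv
  have := reflTransGen_of_backProd_pos hA hedge huv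
  rw [reflTransGen_eq_self] at this
  exact reflTransGen_swap.1 this

lemma exists_backProd_windowProd_pos (hA : ∀ k, 1 ≤ k → Stochastic (A k))
    (hH : ∀ k, 1 ≤ k → ∀ i j, H i j → 0 < A k i j)
    (hT : ∀ m, T ≤ m → ∀ i, HasWalk H i i m) (hT0 : 0 < T)
    (hconn : ∀ l i j, ∃ m, 0 < backProd A l m i j) (l : ℕ) (i j : Fin n) :
    ∃ m, 0 < backProd (windowProd A T) l m i j := by
  obtain ⟨p, hp⟩ := hconn (T * l) i j
  refine ⟨p + 1, ?_⟩
  have hpT : p + T ≤ T * (p + 1) := by nlinarith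
  have hloop : HasWalk H i i (T * (p + 1) - p) := hT _ (by omega) i
  rw [backProd_windowProd, ← Nat.add_sub_of_le (show p ≤ T * (p + 1) by omega), backProd_add]
  exact mul_apply_pos (stochastic_backProd hA _ _).1 (stochastic_backProd hA _ _).1
    (backProd_pos_of_hasWalk hA hH _ hloop) hp

end WindowProd

/-- Absolute probability sequence of the chain `C` (Kolmogorov). -/
def IsAbsProbSeq {n : ℕ} (C : ℕ → Matrix (Fin n) (Fin n) ℝ) (π : ℕ → Fin n → ℝ) :
    Prop :=
  ∀ t, π t ∈ stdSimplex ℝ (Fin n) ∧ π t = π (t + 1) ᵥ* C (t + 1)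

section AbsProbSeq

variable {n : ℕ} {C : ℕ → Matrix (Fin n) (Fin n) ℝ}

/-- A limit point of the vectors `u ⬝ P(K, t)`, `K → ∞`, with `u` uniform. -/
lemma exists_isAbsProbSeq [NeZero n] (hC : ∀ t, Stochastic (C t)) :
    ∃ π, IsAbsProbSeq C π := by
  set u : Fin n → ℝ := fun _ => (n : ℝ)⁻¹
  have hu : u ∈ stdSimplex ℝ (Fin n) :=
    ⟨fun _ => by positivity, by simp [u, Finset.card_univ, NeZero.ne]⟩
  set v : ℕ → ℕ → Fin n → ℝ := fun K t => u ᵥ* backProd C t (K - t)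
  have hv : ∀ K, v K ∈ Set.univ.pi fun _ => stdSimplex ℝ (Fin n) := fun K t _ =>
    (stochastic_backProd (fun k _ => hC k) t (K - t)).vecMul_mem_stdSimplex hu
  have hrec : ∀ K t, t < K → v K t = v K (t + 1) ᵥ* C (t + 1) := by
    intro K t htK
    simp only [v, Matrix.vecMul_vecMul]
    rw [← backProd_one C t, ← backProd_add, Nat.add_comm, Nat.sub_add_eq,
      Nat.sub_add_cancel (by omega)]
  obtain ⟨π, hπ, φ, hφ, hlim⟩ :=
    (isCompact_univ_pi fun _ => isCompact_stdSimplex ℝ (Fin n)).tendsto_subseq hv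
  refine ⟨π, fun t => ⟨hπ t trivial, ?_⟩⟩
  have hclosed : IsClosed {w : ℕ → Fin n → ℝ | w t = w (t + 1) ᵥ* C (t + 1)} :=
    isClosed_eq (continuous_apply t) (by fun_prop)
  refine hclosed.mem_of_tendsto hlim (eventually_atTop.2 ⟨t + 1, fun K hK => ?_⟩)
  exact hrec _ _ (by have : K ≤ φ K := hφ.id_le K; omega)

end AbsProbSeq

section Mass

variable {n : ℕ} {P : Matrix (Fin n) (Fin n) ℝ}

lemma sum_vecMul_eq (p : Fin n → ℝ) (P : Matrix (Fin n) (Fin n) ℝ) (S : Finset (Fin n)) :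
    ∑ j ∈ S, (p ᵥ* P) j = ∑ i, p i * ∑ j ∈ S, P i j := by
  simp only [Matrix.vecMul_apply_eq_sum, Finset.mul_sum]
  exact Finset.sum_comm

/-- With complete reducibility, a set receiving no weight from outside sends none outside, so
its mass is preserved. -/
lemma sum_vecMul_eq_of_no_inflow (hP : Stochastic P) (hcr : CompRed P) {S : Finset (Fin n)}
    (hS : ∀ a ∉ S, ∀ b ∈ S, ¬ 0 < P a b) (p : Fin n → ℝ) :
    ∑ j ∈ S, (p ᵥ* P) j = ∑ i ∈ S, p i := by
  have hzero : ∀ a b, (a ∈ S ↔ b ∉ S) → P a b = 0 := by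
    intro a b hab
    refine ((hP.1 a b).eq_or_lt.resolve_right fun hpos => ?_).symm
    by_cases ha : a ∈ S
    · obtain ⟨x, hx, y, hy, hxy⟩ :=
        (compRed_iff.1 hcr a b hpos).exists_boundary_edge (hab.1 ha) ha
      exact hS x hx y hy hxy
    · exact hS a ha b (not_not.1 (mt hab.2 ha)) hpos
  have hrow : ∀ i, ∑ j ∈ S, P i j = if i ∈ S then 1 else 0 := by
    intro i
    split_ifs with hi
    · rw [← hP.2 i]
      exact Finset.sum_subset (Finset.subset_univ S) fun j _ hj => hzero i j (by tauto)
    · exact Finset.sum_eq_zero fun j hj => hzero i j (by tauto)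
  simp [sum_vecMul_eq, hrow, Finset.sum_ite_mem]

lemma Stochastic.mul_sum_insert_le_sum_vecMul {β : ℝ} (hP : Stochastic P)
    (hlb : ∀ i j, 0 < P i j → β ≤ P i j) (hdiag : ∀ i, 0 < P i i) {p : Fin n → ℝ}
    (hp : ∀ i, 0 ≤ p i) {S : Finset (Fin n)} {a b : Fin n} (ha : a ∉ S) (hb : b ∈ S)
    (hab : 0 < P a b) : β * ∑ i ∈ insert a S, p i ≤ ∑ j ∈ S, (p ᵥ* P) j := by
  have hβ : ∀ i ∈ insert a S, β ≤ ∑ j ∈ S, P i j := by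
    intro i hi
    rcases Finset.mem_insert.1 hi with rfl | hi
    · exact (hlb i b hab).trans (Finset.single_le_sum (fun j _ => hP.1 i j) hb)
    · exact (hlb i i (hdiag i)).trans (Finset.single_le_sum (fun j _ => hP.1 i j) hi)
  rw [sum_vecMul_eq, Finset.mul_sum]
  calc ∑ i ∈ insert a S, β * p i ≤ ∑ i ∈ insert a S, p i * ∑ j ∈ S, P i j :=
        Finset.sum_le_sum fun i hi => by
          rw [mul_comm]
          exact mul_le_mul_of_nonneg_left (hβ i hi) (hp i)
    _ ≤ ∑ i, p i * ∑ j ∈ S, P i j :=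
        Finset.sum_le_sum_of_subset_of_nonneg (Finset.subset_univ _) fun i _ _ =>
          mul_nonneg (hp i) (Finset.sum_nonneg fun j _ => hP.1 i j)

lemma exists_inflow_of_backProd_pos {C : ℕ → Matrix (Fin n) (Fin n) ℝ}
    (hC : ∀ t, Stochastic (C t)) {S : Finset (Fin n)} {l m : ℕ} {a b : Fin n}
    (h : 0 < backProd C l m a b) (ha : a ∉ S) (hb : b ∈ S) :
    ∃ s, l < s ∧ ∃ x ∉ S, ∃ y ∈ S, 0 < C s x y := by
  have hpath := reflTransGen_of_backProd_pos (R := fun x y => ∃ s, l < s ∧ 0 < C s x y)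
    (fun k _ => hC k) (fun r hr _ x y hxy => ⟨r, hr, hxy⟩) h
  obtain ⟨x, hx, y, hy, s, hs, hxy⟩ := hpath.exists_boundary_edge ha hb
  exact ⟨s, hs, x, hx, y, hy, hxy⟩

lemma le_of_lt_of_step {f : ℕ → ℝ} {Q : ℕ → Prop} {b : ℝ}
    (hstep : ∀ t, Q (t + 1) → b ≤ f t) (hconst : ∀ t, ¬ Q (t + 1) → f t = f (t + 1))
    {t s : ℕ} (hts : t < s) (hs : Q s) : b ≤ f t := by
  obtain ⟨d, rfl⟩ := Nat.exists_eq_add_of_lt hts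
  induction d generalizing t with
  | zero => exact hstep t hs
  | succ d ih =>
    by_cases hQ : Q (t + 1)
    · exact hstep t hQ
    · rw [hconst t hQ]
      exact ih (by omega) (by rwa [show t + 1 + d + 1 = t + (d + 1) + 1 by omega])

end Mass

section AbsProbSeqBound

variable {n : ℕ} {C : ℕ → Matrix (Fin n) (Fin n) ℝ} {π : ℕ → Fin n → ℝ} {β : ℝ}

/-- Each missing node costs at most a factor `β`: the mass of `S` stays put until some node
outside sends weight into `S`, and then it dominates `β` times the mass of the larger set. -/
lemma IsAbsProbSeq.pow_le_sum (hπ : IsAbsProbSeq C π) (hC : ∀ t, Stochastic (C t))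
    (hβ0 : 0 ≤ β) (hβ1 : β ≤ 1) (hlb : ∀ t i j, 0 < C t i j → β ≤ C t i j)
    (hdiag : ∀ t i, 0 < C t i i) (hcr : ∀ t, CompRed (C t))
    (hconn : ∀ l i j, ∃ m, 0 < backProd C l m i j) (k : ℕ) :
    ∀ t (S : Finset (Fin n)), S.Nonempty → n ≤ S.card + k →
      β ^ k ≤ ∑ i ∈ S, π t i := by
  induction k with
  | zero =>
    intro t S _ hcard
    have hS : S.card = n := by simpa using (Finset.card_le_univ S).antisymm (by simpa using hcard)
    rw [Finset.eq_univ_of_card S (by simpa using hS), (hπ t).1.2, pow_zero]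
  | succ k ih =>
    intro t S ⟨b, hb⟩ hcard
    by_cases hSu : S = Finset.univ
    · rw [hSu, (hπ t).1.2]
      exact pow_le_one₀ hβ0 hβ1
    obtain ⟨a, ha⟩ : ∃ a, a ∉ S := by
      by_contra! h
      exact hSu (Finset.eq_univ_iff_forall.2 h)
    obtain ⟨m, hm⟩ := hconn t a b
    obtain ⟨s, hts, hs⟩ := exists_inflow_of_backProd_pos hC hm ha hb
    refine le_of_lt_of_step (f := fun r => ∑ i ∈ S, π r i)
      (Q := fun s => ∃ x ∉ S, ∃ y ∈ S, 0 < C s x y)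
      (fun r ⟨x, hx, y, hy, hxy⟩ => ?_) (fun r hr => ?_) hts hs
    · calc β ^ (k + 1) = β * β ^ k := pow_succ' _ _
        _ ≤ β * ∑ i ∈ insert x S, π (r + 1) i :=
          mul_le_mul_of_nonneg_left (ih _ _ (Finset.insert_nonempty _ _)
            (by rw [Finset.card_insert_of_notMem hx]; omega)) hβ0
        _ ≤ ∑ j ∈ S, (π (r + 1) ᵥ* C (r + 1)) j :=
          (hC _).mul_sum_insert_le_sum_vecMul (hlb _) (hdiag _) (hπ _).1.1 hx hy hxy
        _ = ∑ i ∈ S, π r i := by rw [← (hπ r).2]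
    · have := sum_vecMul_eq_of_no_inflow (hC _) (hcr _)
        (fun x hx y hy hxy => hr ⟨x, hx, y, hy, hxy⟩) (π (r + 1))
      rwa [← (hπ r).2] at this

lemma IsAbsProbSeq.pow_le (hπ : IsAbsProbSeq C π) (hC : ∀ t, Stochastic (C t))
    (hβ0 : 0 ≤ β) (hlb : ∀ t i j, 0 < C t i j → β ≤ C t i j)
    (hdiag : ∀ t i, 0 < C t i i) (hcr : ∀ t, CompRed (C t))
    (hconn : ∀ l i j, ∃ m, 0 < backProd C l m i j) (t : ℕ) (i : Fin n) :
    β ^ (n - 1) ≤ π t i := by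
  have hβ1 : β ≤ 1 := (hlb 0 i i (hdiag 0 i)).trans ((hC 0).le_one i i)
  simpa using hπ.pow_le_sum hC hβ0 hβ1 hlb hdiag hcr hconn (n - 1) t {i}
    (Finset.singleton_nonempty i) (by simp; omega)

end AbsProbSeqBound

section Lyapunov

variable {n : ℕ}

/-- Variance decomposition for one step of the chain. -/
lemma Stochastic.sum_vecMul_mul_sq_sub {P : Matrix (Fin n) (Fin n) ℝ} (hP : Stochastic P)
    (p x : Fin n → ℝ) :
    ∑ j, (p ᵥ* P) j * x j ^ 2 - ∑ i, p i * (P *ᵥ x) i ^ 2 =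
      ∑ i, p i * ∑ j, P i j * (x j - (P *ᵥ x) i) ^ 2 := by
  have hvar : ∀ i, ∑ j, P i j * (x j - (P *ᵥ x) i) ^ 2 =
      ∑ j, P i j * x j ^ 2 - (P *ᵥ x) i ^ 2 := by
    intro i
    have hmean : ∑ j, P i j * x j = (P *ᵥ x) i := rfl
    have : ∀ j, P i j * (x j - (P *ᵥ x) i) ^ 2 =
        P i j * x j ^ 2 - 2 * (P *ᵥ x) i * (P i j * x j) + (P *ᵥ x) i ^ 2 * P i j := by
      intro j; ring
    simp only [this, Finset.sum_add_distrib, Finset.sum_sub_distrib, ← Finset.mul_sum, hmean,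
      hP.2 i]
    ring
  have hmoment : ∑ j, (p ᵥ* P) j * x j ^ 2 = ∑ i, p i * ∑ j, P i j * x j ^ 2 := by
    simp only [Matrix.vecMul_apply_eq_sum, Finset.sum_mul, Finset.mul_sum, mul_assoc]
    exact Finset.sum_comm
  simp only [hmoment, hvar, mul_sub, Finset.sum_sub_distrib]

lemma Antitone.tendsto_sub_succ {V : ℕ → ℝ} (hV : Antitone V) (hb : BddBelow (Set.range V)) :
    Tendsto (fun t => V t - V (t + 1)) atTop (nhds 0) := by
  have h := tendsto_atTop_ciInf hV hb
  simpa using h.sub (h.comp (tendsto_add_atTop_nat 1))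

/-- The Lyapunov function `∑ π t i * x t i ^ 2` is nonincreasing and bounded below, so its
decrements, which dominate `p * β * (x t j - x (t + 1) i) ^ 2` on every edge, tend to `0`. -/
lemma IsAbsProbSeq.eventually_abs_sub_le {C : ℕ → Matrix (Fin n) (Fin n) ℝ}
    {π : ℕ → Fin n → ℝ} (hπ : IsAbsProbSeq C π) (hC : ∀ t, Stochastic (C t))
    {p β : ℝ}
    (hp : 0 < p) (hπp : ∀ t i, p ≤ π t i) (hβ : 0 < β)
    (hlb : ∀ t i j, 0 < C t i j → β ≤ C t i j) {x : ℕ → Fin n → ℝ}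
    (hx : ∀ t, x (t + 1) = C (t + 1) *ᵥ x t) {ε : ℝ} (hε : 0 < ε) :
    ∀ᶠ t in atTop, ∀ i j, 0 < C (t + 1) i j → |x t j - x (t + 1) i| ≤ ε := by
  set V : ℕ → ℝ := fun t => ∑ i, π t i * x t i ^ 2
  set D : ℕ → Fin n → Fin n → ℝ := fun t i j =>
    π (t + 1) i * (C (t + 1) i j * (x t j - x (t + 1) i) ^ 2)
  have hDnn : ∀ t i j, 0 ≤ D t i j := fun t i j =>
    mul_nonneg ((hπ _).1.1 i) (mul_nonneg ((hC _).1 i j) (sq_nonneg _))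
  have hdrop : ∀ t, V t - V (t + 1) = ∑ i, ∑ j, D t i j := by
    intro t
    simp only [V, D, ← Finset.mul_sum, hx t]
    nth_rewrite 1 [(hπ t).2]
    exact (hC _).sum_vecMul_mul_sq_sub _ _
  have hanti : Antitone V := antitone_nat_of_succ_le fun t => by
    linarith [hdrop t, Finset.sum_nonneg fun i (_ : i ∈ Finset.univ) =>
      Finset.sum_nonneg fun j (_ : j ∈ Finset.univ) => hDnn t i j]
  have hbdd : BddBelow (Set.range V) := ⟨0, by
    rintro _ ⟨t, rfl⟩
    exact Finset.sum_nonneg fun i _ => mul_nonneg ((hπ t).1.1 i) (sq_nonneg _)⟩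
  have hpos : 0 < p * β * ε ^ 2 := by positivity
  filter_upwards [(hanti.tendsto_sub_succ hbdd).eventually (gt_mem_nhds hpos)] with t ht i j hij
  have hterm : p * β * (x t j - x (t + 1) i) ^ 2 ≤ V t - V (t + 1) := by
    rw [hdrop]
    calc p * β * (x t j - x (t + 1) i) ^ 2 ≤ D t i j := by
          rw [mul_assoc]
          exact mul_le_mul (hπp _ i) (mul_le_mul_of_nonneg_right (hlb _ i j hij) (sq_nonneg _))
            (by positivity) ((hπ _).1.1 i)
      _ ≤ ∑ j', D t i j' := Finset.single_le_sum (fun j' _ => hDnn t i j') (Finset.mem_univ j)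
      _ ≤ ∑ i', ∑ j', D t i' j' := Finset.single_le_sum (f := fun i' => ∑ j', D t i' j')
          (fun i' _ => Finset.sum_nonneg fun j' _ => hDnn t i' j') (Finset.mem_univ i)
  refine abs_le_of_sq_le_sq (lt_of_mul_lt_mul_left (hterm.trans_lt ht) (by positivity)).le hε.le

end Lyapunov

/-- Pigeonhole: the values other than `x a` miss one of the `card ι` intervals
`(x a + k * θ, x a + (k + 1) * θ]`. -/
lemma exists_gap {ι : Type*} [Fintype ι] (x : ι → ℝ) {θ : ℝ} (hθ : 0 < θ) {a b : ι}
    (hab : x a + Fintype.card ι * θ ≤ x b) :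
    ∃ c, x a ≤ c ∧ c + θ < x b ∧ ∀ i, x i ≤ c ∨ c + θ < x i := by
  set f : ι → ℕ := fun i => ⌈(x i - x a) / θ⌉₊
  have hcard : ((Finset.univ.image f).erase 0).card < (Finset.Icc 1 (Fintype.card ι)).card := by
    have h0 : 0 ∈ Finset.univ.image f :=
      Finset.mem_image.2 ⟨a, Finset.mem_univ a, by simp [f]⟩
    have := (Finset.card_image_le (s := Finset.univ) (f := f)).trans_eq Finset.card_univ
    have := Fintype.card_pos_iff.2 ⟨a⟩
    rw [Finset.card_erase_of_mem h0, Nat.card_Icc]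
    omega
  obtain ⟨k, hk, hkf⟩ := Finset.exists_mem_notMem_of_card_lt_card hcard
  obtain ⟨j, rfl⟩ : ∃ j, k = j + 1 := ⟨k - 1, by simp at hk; omega⟩
  have hgap : ∀ i, x i ≤ x a + j * θ ∨ x a + j * θ + θ < x i := by
    intro i
    by_contra! h
    refine hkf (Finset.mem_erase.2
      ⟨by omega, Finset.mem_image.2 ⟨i, Finset.mem_univ i, ?_⟩⟩)
    rw [Nat.ceil_eq_iff (by omega), Nat.add_sub_cancel, lt_div_iff₀ hθ, div_le_iff₀ hθ]
    push_cast
    constructor <;> linarith [h.1, h.2]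
  refine ⟨x a + j * θ, by nlinarith [hθ.le], ?_, hgap⟩
  have hjk : ((j : ℝ) + 1) * θ ≤ Fintype.card ι * θ :=
    mul_le_mul_of_nonneg_right (by simp at hk; exact_mod_cast hk) hθ.le
  refine (hgap b).resolve_left fun hb => ?_
  nlinarith

def IsGapSplit {n : ℕ} (y : Fin n → ℝ) (S : Finset (Fin n)) (c θ : ℝ) : Prop :=
  ∀ i, (i ∈ S → y i ≤ c) ∧ (i ∉ S → c + θ < y i)

section Consensus

variable {n : ℕ} {C : ℕ → Matrix (Fin n) (Fin n) ℝ} {x : ℕ → Fin n → ℝ}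

/-- Once every edge joins values at most `θ / 2` apart, a gap of width `θ` in the values
can never be crossed, so no weight ever flows from above the gap to below it. -/
lemma no_inflow_of_separated (hC : ∀ t, Stochastic (C t)) (hdiag : ∀ t i, 0 < C t i i)
    (hx : ∀ t, x (t + 1) = C (t + 1) *ᵥ x t) {t₀ : ℕ} {θ c : ℝ}
    (hclose : ∀ t, t₀ ≤ t → ∀ i j, 0 < C (t + 1) i j → |x t j - x (t + 1) i| ≤ θ / 4)
    {S : Finset (Fin n)} (hsep : IsGapSplit (x t₀) S c θ) :
    ∀ t, t₀ ≤ t → ∀ a ∉ S, ∀ b ∈ S, ¬ 0 < C (t + 1) a b := by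
  have hside : ∀ t, t₀ ≤ t → IsGapSplit (x t) S c θ →
      ∀ a b, 0 < C (t + 1) a b → (a ∈ S ↔ b ∈ S) := by
    intro t ht hsep a b hab
    have h1 := abs_le.1 (hclose t ht a b hab)
    have h2 := abs_le.1 (hclose t ht a a (hdiag _ a))
    by_cases ha : a ∈ S <;> by_cases hb : b ∈ S <;> simp only [ha, hb]
    · linarith [(hsep a).1 ha, (hsep b).2 hb]
    · linarith [(hsep a).2 ha, (hsep b).1 hb]
  have hinv : ∀ t, t₀ ≤ t → IsGapSplit (x t) S c θ := by
    intro t ht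
    induction t, ht using Nat.le_induction with
    | base => exact hsep
    | succ t ht ih =>
      intro i
      rw [hx t]
      exact ⟨fun hi => (hC _).mulVec_le fun j hj => (ih j).1 ((hside t ht ih i j hj).1 hi),
        fun hi => (hC _).lt_mulVec fun j hj => (ih j).2 (mt (hside t ht ih i j hj).2 hi)⟩
  intro t ht a ha b hb hab
  exact ha ((hside t ht (hinv t ht) a b hab).2 hb)

lemma sub_lt_of_forall_abs_sub_le (hC : ∀ t, Stochastic (C t)) (hdiag : ∀ t i, 0 < C t i i)
    (hconn : ∀ l i j, ∃ m, 0 < backProd C l m i j) (hx : ∀ t, x (t + 1) = C (t + 1) *ᵥ x t)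
    {θ : ℝ} (hθ : 0 < θ) {t₀ : ℕ}
    (hclose : ∀ t, t₀ ≤ t → ∀ i j, 0 < C (t + 1) i j → |x t j - x (t + 1) i| ≤ θ / 4)
    (a b : Fin n) : x t₀ b - x t₀ a < n * θ := by
  by_contra! hab
  obtain ⟨c, hac, hcb, hgap⟩ := exists_gap (x t₀) hθ (a := a) (b := b)
    (by rw [Fintype.card_fin]; linarith)
  set S := Finset.univ.filter fun i => x t₀ i ≤ c
  have hsep : IsGapSplit (x t₀) S c θ := fun i =>
    ⟨fun hi => (Finset.mem_filter.1 hi).2,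
      fun hi => (hgap i).resolve_left fun h => hi (by simpa [S] using h)⟩
  have hb : b ∉ S := fun hb => by linarith [(hsep b).1 hb]
  obtain ⟨m, hm⟩ := hconn t₀ b a
  obtain ⟨s, hs, u, hu, v, hv, huv⟩ :=
    exists_inflow_of_backProd_pos hC hm hb (Finset.mem_filter.2 ⟨Finset.mem_univ a, hac⟩)
  obtain ⟨t, rfl⟩ : ∃ t, s = t + 1 := ⟨s - 1, by omega⟩
  exact no_inflow_of_separated hC hdiag hx hclose hsep t (by omega) u hu v hv huv

lemma exists_tendsto_of_forall_exists_sub_lt [Nonempty (Fin n)]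
    (hmin : Monotone fun t => Finset.univ.inf' Finset.univ_nonempty (x t))
    (hmax : Antitone fun t => Finset.univ.sup' Finset.univ_nonempty (x t))
    (hspread : ∀ g, 0 < g → ∃ t, ∀ a b, x t b - x t a < g) :
    ∃ c, ∀ i, Tendsto (fun t => x t i) atTop (nhds c) := by
  set F : ℕ → ℝ := fun t => Finset.univ.inf' Finset.univ_nonempty (x t)
  set G : ℕ → ℝ := fun t => Finset.univ.sup' Finset.univ_nonempty (x t)
  have hF : ∀ t i, F t ≤ x t i := fun t i => Finset.inf'_le _ (Finset.mem_univ i)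
  have hG : ∀ t i, x t i ≤ G t := fun t i => Finset.le_sup' _ (Finset.mem_univ i)
  set i₀ : Fin n := Classical.arbitrary _
  have hFbdd : BddAbove (Set.range F) := ⟨G 0, by
    rintro _ ⟨t, rfl⟩; exact (hF t i₀).trans ((hG t i₀).trans (hmax t.zero_le))⟩
  have hGbdd : BddBelow (Set.range G) := ⟨F 0, by
    rintro _ ⟨t, rfl⟩; exact ((hmin t.zero_le).trans (hF t i₀)).trans (hG t i₀)⟩
  have hFlim := tendsto_atTop_ciSup hmin hFbdd
  have hGlim := tendsto_atTop_ciInf hmax hGbdd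
  suffices hGF : ⨅ t, G t ≤ ⨆ t, F t by
    have hFG := le_of_tendsto_of_tendsto' hFlim hGlim fun t => (hF t i₀).trans (hG t i₀)
    rw [le_antisymm hGF hFG] at hGlim
    exact ⟨_, fun i =>
      tendsto_of_tendsto_of_tendsto_of_le_of_le hFlim hGlim (hF · i) (hG · i)⟩
  by_contra! hlt
  obtain ⟨t, ht⟩ := hspread _ (sub_pos.2 hlt)
  obtain ⟨a, -, ha⟩ := Finset.exists_mem_eq_inf' Finset.univ_nonempty (x t)
  obtain ⟨b, -, hb⟩ := Finset.exists_mem_eq_sup' Finset.univ_nonempty (x t)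
  have := ht a b
  rw [← ha, ← hb] at this
  linarith [le_ciSup hFbdd t, ciInf_le hGbdd t]

lemma exists_tendsto_of_eventually_abs_sub_le (hC : ∀ t, Stochastic (C t))
    (hdiag : ∀ t i, 0 < C t i i) (hconn : ∀ l i j, ∃ m, 0 < backProd C l m i j)
    (hx : ∀ t, x (t + 1) = C (t + 1) *ᵥ x t)
    (hclose : ∀ ε, 0 < ε →
      ∀ᶠ t in atTop, ∀ i j, 0 < C (t + 1) i j → |x t j - x (t + 1) i| ≤ ε) :
    ∃ c, ∀ i, Tendsto (fun t => x t i) atTop (nhds c) := by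
  rcases isEmpty_or_nonempty (Fin n) with hn | hn
  · exact ⟨0, fun i => isEmptyElim i⟩
  refine exists_tendsto_of_forall_exists_sub_lt
    (monotone_nat_of_le_succ fun t => Finset.le_inf' _ _ fun i _ => ?_)
    (antitone_nat_of_succ_le fun t => Finset.sup'_le _ _ fun i _ => ?_) fun g hg => ?_
  · rw [hx t]
    exact (hC _).le_mulVec fun j _ => Finset.inf'_le _ (Finset.mem_univ j)
  · rw [hx t]
    exact (hC _).mulVec_le fun j _ => Finset.le_sup' _ (Finset.mem_univ j)
  have hn0 : (0 : ℝ) < n := by exact_mod_cast Fin.pos (Classical.arbitrary (Fin n))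
  obtain ⟨t₀, ht₀⟩ := eventually_atTop.1 (hclose (g / n / 4) (by positivity))
  refine ⟨t₀, fun a b => ?_⟩
  have := sub_lt_of_forall_abs_sub_le hC hdiag hconn hx (div_pos hg hn0) ht₀ a b
  rwa [mul_div_cancel₀ _ hn0.ne'] at this

end Consensus

lemma exists_tendsto_backProd {n : ℕ} {C : ℕ → Matrix (Fin n) (Fin n) ℝ} {β : ℝ}
    (hC : ∀ t, Stochastic (C t)) (hβ : 0 < β) (hlb : ∀ t i j, 0 < C t i j → β ≤ C t i j)
    (hdiag : ∀ t i, 0 < C t i i) (hcr : ∀ t, CompRed (C t))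
    (hconn : ∀ l i j, ∃ m, 0 < backProd C l m i j) (j : Fin n) :
    ∃ c, ∀ i, Tendsto (fun t => backProd C 0 t i j) atTop (nhds c) := by
  have : NeZero n := ⟨j.pos.ne'⟩
  obtain ⟨π, hπ⟩ := exists_isAbsProbSeq hC
  have hx : ∀ t, (fun i => backProd C 0 (t + 1) i j) =
      C (t + 1) *ᵥ fun i => backProd C 0 t i j :=
    fun t => funext fun i => by rw [backProd, zero_add]; rfl
  exact exists_tendsto_of_eventually_abs_sub_le hC hdiag hconn hx fun ε hε =>
    hπ.eventually_abs_sub_le hC (pow_pos hβ _) (hπ.pow_le hC hβ.le hlb hdiag hcr hconn) hβ hlb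
      hx hε

lemma tendsto_backProd_of_tendsto_mul {n : ℕ} {A : ℕ → Matrix (Fin n) (Fin n) ℝ}
    (hA : ∀ k, 1 ≤ k → Stochastic (A k)) {T : ℕ} (hT : 0 < T) {j : Fin n} {c : ℝ}
    (h : ∀ i, Tendsto (fun m => backProd A 0 (T * m) i j) atTop (nhds c)) (i : Fin n) :
    Tendsto (fun k => backProd A 0 k i j) atTop (nhds c) := by
  have hdiv := Nat.tendsto_div_const_atTop hT.ne'
  have hsplit : ∀ k, backProd A 0 k i j =
      (backProd A (T * (k / T)) (k % T) *ᵥ fun l => backProd A 0 (T * (k / T)) l j) i := by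
    intro k
    conv_lhs => rw [← Nat.div_add_mod k T, backProd_add, zero_add]
    rfl
  simp only [hsplit]
  refine tendsto_order.2 ⟨fun a ha => ?_, fun a ha => ?_⟩
  · filter_upwards [hdiv.eventually (eventually_all.2 fun l => (tendsto_order.1 (h l)).1 a ha)]
      with k hk
    exact (stochastic_backProd hA _ _).lt_mulVec fun l _ => hk l
  · filter_upwards [hdiv.eventually (eventually_all.2 fun l => (tendsto_order.1 (h l)).2 a ha)]
      with k hk
    exact (stochastic_backProd hA _ _).mulVec_lt fun l _ => hk l

lemma stochastic_of_tendsto {n : ℕ} {P : ℕ → Matrix (Fin n) (Fin n) ℝ}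
    {L : Matrix (Fin n) (Fin n) ℝ} (hP : ∀ k, Stochastic (P k))
    (h : ∀ i j, Tendsto (fun k => P k i j) atTop (nhds (L i j))) : Stochastic L := by
  refine ⟨fun i j => ge_of_tendsto' (h i j) fun k => (hP k).1 i j, fun i => ?_⟩
  have hsum : Tendsto (fun k => ∑ j, P k i j) atTop (nhds (∑ j, L i j)) :=
    tendsto_finsetSum _ fun j _ => h i j
  simp only [(hP _).2 i] at hsum
  exact tendsto_nhds_unique hsum tendsto_const_nhds

theorem stmt16_general {n : ℕ} (A : ℕ → Matrix (Fin n) (Fin n) ℝ)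
    (H : Fin n → Fin n → Prop) (α : ℝ) (hα : 0 < α)
    (hstoch : ∀ k, 1 ≤ k → Stochastic (A k))
    (hlb : ∀ k, 1 ≤ k → ∀ i j, 0 < A k i j → α ≤ A k i j)
    (hep : ∀ k, 1 ≤ k → ∃ K, k ≤ K ∧
      ∀ i j, 0 < (∑ k' ∈ Finset.Icc k K, backProd A (k - 1) (k' + 1 - k)) i j)
    (hcr : ∀ k, 1 ≤ k → CompRed (A k))
    (hsub : ∀ k, 1 ≤ k → ∀ i j, H i j → 0 < A k i j)
    (hap : ∀ i : Fin n, AperiodicAt H i) :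
    ∃ L : Matrix (Fin n) (Fin n) ℝ, Stochastic L ∧ (∀ i i' j, L i j = L i' j) ∧
      ∀ i j, Tendsto (fun k => backProd A 0 k i j) atTop (nhds (L i j)) := by
  obtain ⟨T, hT⟩ := eventually_atTop.1
    ((eventually_all.2 fun i => (hap i).eventually_hasWalk).and (eventually_gt_atTop 0))
  have hT0 : 0 < T := (hT T le_rfl).2
  have hwalk : ∀ m, T ≤ m → ∀ i, HasWalk H i i m := fun m hm => (hT m hm).1
  have hcol : ∀ j, ∃ c, ∀ i,
      Tendsto (fun t => backProd (windowProd A T) 0 t i j) atTop (nhds c) :=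
    exists_tendsto_backProd (stochastic_windowProd hstoch T) (pow_pos hα T)
      (fun _ _ _ h => pow_le_backProd_of_pos hstoch hα.le hlb h)
      (windowProd_diag_pos hstoch hsub (hwalk T le_rfl)) (compRed_windowProd hstoch hsub hwalk hcr)
      (exists_backProd_windowProd_pos hstoch hsub hwalk hT0 (exists_backProd_pos hep))
  choose c hc using hcol
  have hlim : ∀ i j, Tendsto (fun k => backProd A 0 k i j) atTop (nhds (c j)) := fun i j =>
    tendsto_backProd_of_tendsto_mul hstoch hT0
      (fun i => by simpa [backProd_windowProd] using hc j i) i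
  exact ⟨Matrix.of fun _ j => c j, stochastic_of_tendsto (stochastic_backProd hstoch 0) hlim,
    fun _ _ _ => rfl, hlim⟩

theorem stmt16 {n : ℕ} (A : ℕ → Matrix (Fin n) (Fin n) ℝ)
    (H : Fin n → Fin n → Prop) (α : ℝ) (hα : 0 < α)
    (hstoch : ∀ k, 1 ≤ k → Stochastic (A k))
    (hlb : ∀ k, 1 ≤ k → ∀ i j, 0 < A k i j → α ≤ A k i j)
    (hep : ∀ k, 1 ≤ k → ∃ K, k ≤ K ∧
      ∀ i j, 0 < (∑ k' ∈ Finset.Icc k K, backProd A (k - 1) (k' + 1 - k)) i j)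
    (hcr : ∀ k, 1 ≤ k → CompRed (A k))
    (hsub : ∀ k, 1 ≤ k → ∀ i j, H i j → 0 < A k i j)
    (hns : ∀ i : Fin n, ∃ j, H i j)
    (hap : ∀ i : Fin n, AperiodicAt H i) :
    ∃ L : Matrix (Fin n) (Fin n) ℝ, Stochastic L ∧ (∀ i i' j, L i j = L i' j) ∧
      ∀ i j, Tendsto (fun k => backProd A 0 k i j) atTop (nhds (L i j)) :=
  stmt16_general A H α hα hstoch hlb hep hcr hsub hap
end

section
/- Let 𝓜 be a finite set of n×n row-stochastic matrices such that every finite product of matrices from 𝓜 is ergodic (i.e., some power of the product is entrywise positive, equivalently the product is primitive), and let A(k) be any sequence of elements of 𝓜. Then the products A(k)·A(k−1)···A(1) converge entrywise to a row-stochastic matrix of rank 1. -/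
/-!
Because every product of matrices from 𝓜 is primitive, a pigeonhole argument on the zero patterns
of the prefix products shows that there is an `N` such that every product of `N` matrices from 𝓜
is entrywise positive; as 𝓜 is finite, the entries of all these products are at least some
`δ > 0`. Multiplying a vector by a stochastic matrix does not increase its largest entry nor
decrease its smallest one, and a stochastic matrix with entries at least `δ` shrinks the spread
`max - min` by the factor `1 - nδ`. So the largest and the smallest entry of every column of
`A(k) ⋯ A(1)` converge to a common limit.
-/

open Matrix Filter

open Finset Topology

lemma stochastic_iff_mem_rowStochastic {n : ℕ} {P : Matrix (Fin n) (Fin n) ℝ} :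
    Stochastic P ↔ P ∈ rowStochastic ℝ (Fin n) :=
  mem_rowStochastic_iff_sum.symm

def IsErgodic {ι : Type*} [Fintype ι] [DecidableEq ι] (P : Matrix ι ι ℝ) : Prop :=
  ∃ m, 1 ≤ m ∧ ∀ i j, 0 < (P ^ m) i j

section Positivity

variable {ι : Type*} [Fintype ι] {P Q W : Matrix ι ι ℝ}

lemma mul_apply_pos_iff (hP : ∀ i j, 0 ≤ P i j) (hQ : ∀ i j, 0 ≤ Q i j) (i j : ι) :
    0 < (P * Q) i j ↔ ∃ k, 0 < P i k ∧ 0 < Q k j := by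
  rw [mul_apply, sum_pos_iff_of_nonneg fun k _ => mul_nonneg (hP i k) (hQ k j)]
  simp only [mem_univ, true_and]
  refine exists_congr fun k => ⟨fun h => ?_, fun h => mul_pos h.1 h.2⟩
  have hPik : 0 < P i k := (hP i k).lt_of_ne fun h0 => by simp [← h0] at h
  exact ⟨hPik, (mul_pos_iff_of_pos_left hPik).1 h⟩

variable [DecidableEq ι]

lemma exists_apply_pos_of_mem_rowStochastic (hP : P ∈ rowStochastic ℝ ι) (i : ι) :
    ∃ k, 0 < P i k := by
  by_contra! h
  have : ∑ k, P i k = 0 := sum_eq_zero fun k _ => (h k).antisymm (hP.1 i k)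
  simp [sum_row_of_mem_rowStochastic hP i] at this

lemma IsErgodic.exists_apply_pos (hP : P ∈ rowStochastic ℝ ι) (h : IsErgodic P) (j : ι) :
    ∃ k, 0 < P k j := by
  obtain ⟨m, hm, hpos⟩ := h
  obtain ⟨t, rfl⟩ := Nat.exists_eq_add_of_le' hm
  obtain ⟨k, -, hk⟩ := (mul_apply_pos_iff (pow_mem hP t).1 hP.1 j j).1 (pow_succ P t ▸ hpos j j)
  exact ⟨k, hk⟩

lemma mul_pos_of_pos_of_isErgodic (hP : ∀ i j, 0 < P i j) (hQ : Q ∈ rowStochastic ℝ ι)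
    (hQe : IsErgodic Q) (i j : ι) : 0 < (P * Q) i j := by
  obtain ⟨k, hk⟩ := hQe.exists_apply_pos hQ j
  exact (mul_apply_pos_iff (fun i j => (hP i j).le) hQ.1 i j).2 ⟨k, hP i k, hk⟩

lemma apply_pos_iff_mul_pow_apply_pos (hP : P ∈ rowStochastic ℝ ι) (hW : W ∈ rowStochastic ℝ ι)
    (hPW : ∀ i j, 0 < P i j ↔ 0 < (P * W) i j) (t : ℕ) (i j : ι) :
    0 < P i j ↔ 0 < (P * W ^ t) i j := by
  induction t generalizing i j with
  | zero => simp
  | succ t ih =>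
    rw [pow_succ, ← mul_assoc, mul_apply_pos_iff (mul_mem hP (pow_mem hW t)).1 hW.1, hPW,
      mul_apply_pos_iff hP.1 hW.1]
    simp only [← ih]

lemma pos_of_apply_pos_iff_mul_apply_pos (hP : P ∈ rowStochastic ℝ ι)
    (hW : W ∈ rowStochastic ℝ ι) (hWe : IsErgodic W)
    (hPW : ∀ i j, 0 < P i j ↔ 0 < (P * W) i j) (i j : ι) : 0 < P i j := by
  obtain ⟨m, -, hpos⟩ := hWe
  obtain ⟨k, hk⟩ := exists_apply_pos_of_mem_rowStochastic hP i
  exact (apply_pos_iff_mul_pow_apply_pos hP hW hPW m i j).2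
    ((mul_apply_pos_iff hP.1 (pow_mem hW m).1 i j).2 ⟨k, hk, hpos k j⟩)

variable {M : Set (Matrix ι ι ℝ)}

/-- The factors between the prefixes of lengths `a < b` multiply to a primitive `W`, and the
prefix `P` has the same zero pattern as `P * W`; this forces `P` to be positive. -/
lemma prod_pos_of_take_apply_pos_iff (hM : ∀ B ∈ M, B ∈ rowStochastic ℝ ι)
    (herg : ∀ L : List (Matrix ι ι ℝ), (∀ B ∈ L, B ∈ M) → L ≠ [] → IsErgodic L.prod)
    {L : List (Matrix ι ι ℝ)} (hL : ∀ B ∈ L, B ∈ M) {a b : ℕ} (hab : a < b) (hb : b < L.length)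
    (hpat : ∀ i j, 0 < (L.take a).prod i j ↔ 0 < (L.take b).prod i j) (i j : ι) :
    0 < L.prod i j := by
  have hsub : ∀ K : List (Matrix ι ι ℝ), K ⊆ L → ∀ B ∈ K, B ∈ M := fun K hK B hB => hL B (hK hB)
  have hstoch : ∀ K : List (Matrix ι ι ℝ), K ⊆ L → K.prod ∈ rowStochastic ℝ ι :=
    fun K hK => Submonoid.list_prod_mem _ fun B hB => hM B (hsub K hK B hB)
  set w := (L.drop a).take (b - a)
  have hwL : w ⊆ L := ((List.take_sublist _ _).trans (List.drop_sublist _ _)).subset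
  have hw : w ≠ [] := by
    rw [← List.length_pos_iff, List.length_take, List.length_drop]
    omega
  have htake : L.take b = L.take a ++ w := by
    rw [← List.take_add, Nat.add_sub_cancel' hab.le]
  have hpos : ∀ i j, 0 < (L.take a).prod i j := by
    refine pos_of_apply_pos_iff_mul_apply_pos (hstoch _ (List.take_subset _ _)) (hstoch w hwL)
      (herg w (hsub w hwL) hw) fun i j => ?_
    rw [hpat, htake, List.prod_append]
  have hdrop : L.drop a ≠ [] := by
    rw [← List.length_pos_iff, List.length_drop]
    omega
  rw [← List.take_append_drop a L, List.prod_append]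
  exact mul_pos_of_pos_of_isErgodic hpos (hstoch _ (List.drop_subset _ _))
    (herg _ (hsub _ (List.drop_subset _ _)) hdrop) i j

lemma exists_forall_length_eq_prod_pos (hM : ∀ B ∈ M, B ∈ rowStochastic ℝ ι)
    (herg : ∀ L : List (Matrix ι ι ℝ), (∀ B ∈ L, B ∈ M) → L ≠ [] → IsErgodic L.prod) :
    ∃ N, ∀ L : List (Matrix ι ι ℝ), (∀ B ∈ L, B ∈ M) → L.length = N →
      ∀ i j, 0 < L.prod i j := by
  classical
  refine ⟨Fintype.card (ι → ι → Prop) + 1, fun L hL hlen => ?_⟩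
  obtain ⟨a, b, hne, hab⟩ := Fintype.exists_ne_map_eq_of_card_lt
    (fun k : Fin L.length => fun i j => 0 < (L.take k).prod i j) (by simp [hlen])
  have hpat : ∀ i j, 0 < (L.take a).prod i j ↔ 0 < (L.take b).prod i j := fun i j =>
    Iff.of_eq (congrFun (congrFun hab i) j)
  rcases Fin.val_ne_of_ne hne |>.lt_or_gt with hlt | hlt
  · exact prod_pos_of_take_apply_pos_iff hM herg hL hlt b.2 hpat
  · exact prod_pos_of_take_apply_pos_iff hM herg hL hlt a.2 fun i j => (hpat i j).symm

end Positivity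

lemma exists_pos_forall_le_of_finite {ι : Type*} [Finite ι] {S : Set (Matrix ι ι ℝ)}
    (hS : S.Finite) (hpos : ∀ P ∈ S, ∀ i j, 0 < P i j) :
    ∃ δ > 0, ∀ P ∈ S, ∀ i j, δ ≤ P i j := by
  have h : ∀ᶠ δ in 𝓝[>] (0 : ℝ), ∀ P ∈ S, ∀ i j, δ ≤ P i j :=
    hS.eventually_all.2 fun P hP => eventually_all.2 fun i => eventually_all.2 fun j =>
      nhdsWithin_le_nhds (eventually_le_nhds (hpos P hP i j))
  obtain ⟨δ, hδ, hδpos⟩ := (h.and self_mem_nhdsWithin).exists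
  exact ⟨δ, hδpos, hδ⟩

lemma mem_rowStochastic_of_tendsto {ι : Type*} [Fintype ι] [DecidableEq ι]
    {P : ℕ → Matrix ι ι ℝ} {L : Matrix ι ι ℝ} (hP : ∀ k, P k ∈ rowStochastic ℝ ι)
    (h : ∀ i j, Tendsto (fun k => P k i j) atTop (𝓝 (L i j))) : L ∈ rowStochastic ℝ ι := by
  refine mem_rowStochastic_iff_sum.2 ⟨fun i j => ge_of_tendsto' (h i j) fun k => (hP k).1 i j,
    fun i => tendsto_nhds_unique (tendsto_finsetSum _ fun j _ => h i j) ?_⟩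
  simp only [sum_row_of_mem_rowStochastic (hP _)]
  exact tendsto_const_nhds

lemma mulVec_apply_eq {ι : Type*} [Fintype ι] (Q : Matrix ι ι ℝ) (δ : ℝ) (x : ι → ℝ) (i : ι) :
    (Q *ᵥ x) i = δ * ∑ k, x k + ∑ k, (Q i k - δ) * x k := by
  simp only [mulVec, dotProduct, mul_sum, ← sum_add_distrib]
  exact sum_congr rfl fun k _ => by ring

lemma sum_sub_eq_of_mem_rowStochastic {ι : Type*} [Fintype ι] [DecidableEq ι]
    {Q : Matrix ι ι ℝ} (hQ : Q ∈ rowStochastic ℝ ι) (δ : ℝ) (i : ι) :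
    ∑ k, (Q i k - δ) = 1 - Fintype.card ι * δ := by
  simp [sum_sub_distrib, sum_row_of_mem_rowStochastic hQ i]

section Spread

variable {ι : Type*} [Fintype ι] [Nonempty ι]

noncomputable def maxEntry (x : ι → ℝ) : ℝ := univ.sup' univ_nonempty x

noncomputable def minEntry (x : ι → ℝ) : ℝ := univ.inf' univ_nonempty x

lemma apply_le_maxEntry (x : ι → ℝ) (i : ι) : x i ≤ maxEntry x :=
  le_sup' x (mem_univ i)

lemma minEntry_le_apply (x : ι → ℝ) (i : ι) : minEntry x ≤ x i :=
  inf'_le x (mem_univ i)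

variable [DecidableEq ι] {Q : Matrix ι ι ℝ} {δ : ℝ}

lemma mulVec_apply_le (hQ : Q ∈ rowStochastic ℝ ι) (hδ : ∀ i k, δ ≤ Q i k) (x : ι → ℝ)
    (i : ι) : (Q *ᵥ x) i ≤ δ * ∑ k, x k + (1 - Fintype.card ι * δ) * maxEntry x := by
  rw [mulVec_apply_eq Q δ, ← sum_sub_eq_of_mem_rowStochastic hQ δ i, sum_mul]
  gcongr with k
  · exact sub_nonneg.2 (hδ i k)
  · exact apply_le_maxEntry x k

lemma le_mulVec_apply (hQ : Q ∈ rowStochastic ℝ ι) (hδ : ∀ i k, δ ≤ Q i k) (x : ι → ℝ)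
    (i : ι) : δ * ∑ k, x k + (1 - Fintype.card ι * δ) * minEntry x ≤ (Q *ᵥ x) i := by
  rw [mulVec_apply_eq Q δ, ← sum_sub_eq_of_mem_rowStochastic hQ δ i, sum_mul]
  gcongr with k
  · exact sub_nonneg.2 (hδ i k)
  · exact minEntry_le_apply x k

lemma maxEntry_mulVec_le (hQ : Q ∈ rowStochastic ℝ ι) (x : ι → ℝ) :
    maxEntry (Q *ᵥ x) ≤ maxEntry x :=
  sup'_le _ _ fun i _ => by simpa using mulVec_apply_le hQ hQ.1 x i

lemma minEntry_le_minEntry_mulVec (hQ : Q ∈ rowStochastic ℝ ι) (x : ι → ℝ) :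
    minEntry x ≤ minEntry (Q *ᵥ x) :=
  le_inf' _ _ fun i _ => by simpa using le_mulVec_apply hQ hQ.1 x i

lemma maxEntry_sub_minEntry_mulVec_le (hQ : Q ∈ rowStochastic ℝ ι) (hδ : ∀ i k, δ ≤ Q i k)
    (x : ι → ℝ) : maxEntry (Q *ᵥ x) - minEntry (Q *ᵥ x) ≤
      (1 - Fintype.card ι * δ) * (maxEntry x - minEntry x) := by
  have hmax : maxEntry (Q *ᵥ x) ≤ δ * ∑ k, x k + (1 - Fintype.card ι * δ) * maxEntry x :=
    sup'_le _ _ fun i _ => mulVec_apply_le hQ hδ x i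
  have hmin : δ * ∑ k, x k + (1 - Fintype.card ι * δ) * minEntry x ≤ minEntry (Q *ᵥ x) :=
    le_inf' _ _ fun i _ => le_mulVec_apply hQ hδ x i
  linarith

end Spread

theorem exists_tendsto_const_of_mulVec {ι : Type*} [Fintype ι] [DecidableEq ι]
    {x : ℕ → ι → ℝ} {Q : ℕ → Matrix ι ι ℝ} (hQ : ∀ k, Q k ∈ rowStochastic ℝ ι)
    (hx : ∀ k, x (k + 1) = Q k *ᵥ x k) {N : ℕ} {δ : ℝ} (hδ : 0 < δ)
    (hwin : ∀ k, ∃ R ∈ rowStochastic ℝ ι, (∀ i j, δ ≤ R i j) ∧ x (k + N) = R *ᵥ x k) :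
    ∃ c, ∀ i, Tendsto (fun k => x k i) atTop (𝓝 c) := by
  cases isEmpty_or_nonempty ι
  · exact ⟨0, isEmptyElim⟩
  set u := fun k => maxEntry (x k)
  set v := fun k => minEntry (x k)
  have hu : Antitone u := antitone_nat_of_succ_le fun k => by
    simpa only [u, hx k] using maxEntry_mulVec_le (hQ k) (x k)
  have hv : Monotone v := monotone_nat_of_le_succ fun k => by
    simpa only [v, hx k] using minEntry_le_minEntry_mulVec (hQ k) (x k)
  have hvu : ∀ k, v k ≤ u k := fun k =>
    (minEntry_le_apply _ (Classical.arbitrary ι)).trans (apply_le_maxEntry _ _)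
  have hu_lim := tendsto_atTop_ciInf hu ⟨v 0, by
    rintro _ ⟨k, rfl⟩; exact (hv (Nat.zero_le k)).trans (hvu k)⟩
  have hv_lim := tendsto_atTop_ciSup hv ⟨u 0, by
    rintro _ ⟨k, rfl⟩; exact (hvu k).trans (hu (Nat.zero_le k))⟩
  set a := ⨅ k, u k
  set b := ⨆ k, v k
  have hcontr : ∀ k, u (k + N) - v (k + N) ≤ (1 - Fintype.card ι * δ) * (u k - v k) := by
    intro k
    obtain ⟨R, hR, hRδ, hxR⟩ := hwin k
    simpa only [u, v, hxR] using maxEntry_sub_minEntry_mulVec_le hR hRδ (x k)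
  have hab : a - b ≤ (1 - Fintype.card ι * δ) * (a - b) :=
    le_of_tendsto_of_tendsto' ((hu_lim.sub hv_lim).comp (tendsto_add_atTop_nat N))
      ((hu_lim.sub hv_lim).const_mul _) hcontr
  have hba : b ≤ a := le_of_tendsto_of_tendsto' hv_lim hu_lim hvu
  have hcard : (0 : ℝ) < Fintype.card ι * δ := by
    have := Fintype.card_pos (α := ι)
    positivity
  have hab_eq : b = a := by nlinarith
  refine ⟨a, fun i => tendsto_of_tendsto_of_tendsto_of_le_of_le (hab_eq ▸ hv_lim) hu_lim
    (fun k => minEntry_le_apply (x k) i) fun k => apply_le_maxEntry (x k) i⟩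

section BackProd

variable {n : ℕ} (A : ℕ → Matrix (Fin n) (Fin n) ℝ)

lemma backProd_add_s17 (j l m : ℕ) : backProd A j (l + m) = backProd A (j + l) m * backProd A j l := by
  induction m with
  | zero => simp [backProd]
  | succ m ih => rw [← add_assoc, backProd, backProd, ih, mul_assoc, add_assoc j l m]

lemma backProd_eq_prod_ofFn (l m : ℕ) :
    backProd A l m = (List.ofFn fun t : Fin m => A (l + m - t)).prod := by
  induction m with
  | zero => rfl
  | succ m ih =>
    rw [List.ofFn_succ, List.prod_cons, backProd, ih]
    congr 2
    refine congrArg List.ofFn (funext fun t => congrArg A ?_)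
    simp only [Fin.val_succ]
    omega

lemma backProd_mem_rowStochastic (hA : ∀ k, 1 ≤ k → A k ∈ rowStochastic ℝ (Fin n)) (l m : ℕ) :
    backProd A l m ∈ rowStochastic ℝ (Fin n) := by
  induction m with
  | zero => exact one_mem _
  | succ m ih => exact mul_mem (hA _ (by omega)) ih

end BackProd

theorem stmt17 {n : ℕ} (M : Finset (Matrix (Fin n) (Fin n) ℝ))
    (hstoch : ∀ B ∈ M, Stochastic B)
    (herg : ∀ L : List (Matrix (Fin n) (Fin n) ℝ), (∀ B ∈ L, B ∈ M) → L ≠ [] →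
      ∃ m, 1 ≤ m ∧ ∀ i j, 0 < (L.prod ^ m) i j)
    (A : ℕ → Matrix (Fin n) (Fin n) ℝ) (hA : ∀ k, 1 ≤ k → A k ∈ M) :
    ∃ L : Matrix (Fin n) (Fin n) ℝ, Stochastic L ∧ (∀ i i' j, L i j = L i' j) ∧
      ∀ i j, Tendsto (fun k => backProd A 0 k i j) atTop (nhds (L i j)) := by
  have hM : ∀ B ∈ M, B ∈ rowStochastic ℝ (Fin n) := fun B hB =>
    stochastic_iff_mem_rowStochastic.1 (hstoch B hB)
  have hAs : ∀ k, 1 ≤ k → A k ∈ rowStochastic ℝ (Fin n) := fun k hk => hM _ (hA k hk)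
  obtain ⟨N, hNpos⟩ :=
    exists_forall_length_eq_prod_pos (M := (M : Set (Matrix (Fin n) (Fin n) ℝ))) hM herg
  obtain ⟨δ, hδ, hδle⟩ := exists_pos_forall_le_of_finite
    (Set.finite_range fun f : Fin N → M =>
      (List.ofFn fun t => ((f t : M) : Matrix (Fin n) (Fin n) ℝ)).prod)
    (by
      rintro _ ⟨f, rfl⟩
      refine hNpos _ (fun B hB => ?_) List.length_ofFn
      obtain ⟨t, rfl⟩ := List.mem_ofFn.1 hB
      exact Finset.mem_coe.2 (f t).2)
  have hwin : ∀ l i j, δ ≤ backProd A l N i j := fun l =>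
    hδle _ ⟨fun t => ⟨A (l + N - t), hA _ (by omega)⟩, (backProd_eq_prod_ofFn A l N).symm⟩
  have hcol : ∀ j, ∃ c, ∀ i, Tendsto (fun k => backProd A 0 k i j) atTop (𝓝 c) := fun j =>
    exists_tendsto_const_of_mulVec (x := fun k i => backProd A 0 k i j) (N := N)
      (fun k => hAs (k + 1) (by omega)) (fun k => by simp only [backProd, zero_add]; rfl) hδ
      fun k => ⟨backProd A k N, backProd_mem_rowStochastic A hAs k N, hwin k, by
        simp only [backProd_add_s17 A 0 k N, zero_add]; rfl⟩
  choose c hc using hcol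
  have hlim : ∀ i j, Tendsto (fun k => backProd A 0 k i j) atTop (𝓝 (of (fun _ j => c j) i j)) :=
    fun i j => hc j i
  exact ⟨of fun _ j => c j, stochastic_iff_mem_rowStochastic.2
    (mem_rowStochastic_of_tendsto (backProd_mem_rowStochastic A hAs 0) hlim), fun _ _ _ => rfl,
    hlim⟩
end
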